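/- arXiv:2203.14772 — 8 statements merged into one kernel-verified Lean document; each statement's English description precedes it below -/
import Mathlib

section
/- For c in (0,1) and x > 0, the integral of c*t*y^{c-1}/(t+y)^{c+1} over y from x-t to infinity plus (x-t)/x^c equals x^{1-c}, for every 0 < t <= x. -/
open MeasureTheory Real Set

/-! Since `y ^ (1 - c) * y ^ (c - 1) = 1` for `y > 0`, the integrand is `c t (y + t) ^ (-(c + 1))`,
whose integral over `(x - t, ∞)` is `t x ^ (-c)`; adding `(x - t) x ^ (-c)` gives `x ^ (1 - c)`. -/

theorem integral_Ioi_comp_add_right (f : ℝ → ℝ) (a d : ℝ) :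
    ∫ y in Ioi a, f (y + d) = ∫ y in Ioi (a + d), f y := by
  have hpre : (· + d) ⁻¹' Ioi (a + d) = Ioi a := by
    ext y; simp
  rw [← hpre]
  exact (measurePreserving_add_right volume d).setIntegral_preimage_emb
    (measurableEmbedding_addRight d) f (Ioi (a + d))

theorem integral_Ioi_add_rpow_of_lt {a : ℝ} (ha : a < -1) {b d : ℝ} (hbd : 0 < b + d) :
    ∫ y in Ioi b, (y + d) ^ a = -(b + d) ^ (a + 1) / (a + 1) := by
  rw [integral_Ioi_comp_add_right (· ^ a), integral_Ioi_rpow_of_lt ha hbd]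

theorem stmt_1_general (c x t : ℝ) (hc0 : 0 < c) (hx : 0 < x) (htx : t ≤ x) :
    (∫ y in Set.Ioi (x - t), y ^ (1 - c) * (c * t * y ^ (c - 1) / (t + y) ^ (c + 1)))
      + (x - t) / x ^ c = x ^ (1 - c) := by
  have hkernel : EqOn (fun y ↦ y ^ (1 - c) * (c * t * y ^ (c - 1) / (t + y) ^ (c + 1)))
      (fun y ↦ c * t * (y + t) ^ (-(c + 1))) (Ioi (x - t)) := by
    intro y (hy : x - t < y)
    have hy0 : 0 < y := by linarith
    have hcancel : y ^ (1 - c) * y ^ (c - 1) = 1 := by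
      rw [← rpow_add hy0, sub_add_sub_cancel', sub_self, rpow_zero]
    dsimp only
    rw [rpow_neg (by linarith), add_comm y t]
    linear_combination c * t * ((t + y) ^ (c + 1))⁻¹ * hcancel
  rw [setIntegral_congr_fun measurableSet_Ioi hkernel, integral_const_mul,
    integral_Ioi_add_rpow_of_lt (by linarith) (by linarith), sub_add_cancel,
    show -(c + 1) + 1 = -c by ring, rpow_neg hx.le, rpow_sub hx, rpow_one]
  field_simp
  ring

theorem stmt_1 (c x t : ℝ) (hc0 : 0 < c) (hc1 : c < 1) (hx : 0 < x)
    (ht0 : 0 < t) (htx : t ≤ x) :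
    (∫ y in Set.Ioi (x - t), y ^ (1 - c) * (c * t * y ^ (c - 1) / (t + y) ^ (c + 1)))
      + (x - t) / x ^ c = x ^ (1 - c) :=
  stmt_1_general c x t hc0 hx htx
end

section
/- For c in (0,1) and 0 < x < t, one has int_x^t (t-s)^{1-c} (s-x)^{c-1} s^{-1} ds = ((t/x)^{1-c} - 1) * B(c,1-c), where B is the Beta function. -/
open MeasureTheory Real Set

-- L1: real beta integral value
theorem beta_real {c : ℝ} (hc0 : 0 < c) (hc1 : c < 1) :
    ∫ u in Set.Ioo (0:ℝ) 1, u ^ (c-1) * (1-u) ^ (-c) = Real.Gamma c * Real.Gamma (1-c) := by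
  have h1c : (0:ℝ) < 1 - c := by linarith
  have hbeta := Complex.Gamma_mul_Gamma_eq_betaIntegral (s := (c:ℂ)) (t := ((1-c : ℝ):ℂ))
    (by simpa using hc0) (by simpa using h1c)
  have hsum : (c:ℂ) + ((1-c:ℝ):ℂ) = 1 := by push_cast; ring
  rw [hsum, Complex.Gamma_one, one_mul] at hbeta
  have heq : Complex.betaIntegral (c:ℂ) ((1-c:ℝ):ℂ)
      = ((∫ u in (0:ℝ)..1, u ^ (c-1) * (1-u) ^ (-c) : ℝ) : ℂ) := by
    rw [Complex.betaIntegral, ← intervalIntegral.integral_ofReal]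
    refine intervalIntegral.integral_congr (fun u hu => ?_)
    rw [Set.uIcc_of_le (by norm_num : (0:ℝ) ≤ 1)] at hu
    push_cast
    rw [Complex.ofReal_cpow hu.1, Complex.ofReal_cpow (by linarith [hu.2] : (0:ℝ) ≤ 1 - u)]
    push_cast
    ring_nf
  rw [heq] at hbeta
  have : Real.Gamma c * Real.Gamma (1-c) = ∫ u in (0:ℝ)..1, u ^ (c-1) * (1-u) ^ (-c) := by
    have := hbeta
    rw [Complex.Gamma_ofReal, Complex.Gamma_ofReal, ← Complex.ofReal_mul] at this
    exact_mod_cast this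
  rw [this, intervalIntegral.integral_of_le (by norm_num : (0:ℝ) ≤ 1),
    MeasureTheory.integral_Ioc_eq_integral_Ioo]

theorem beta_integrable {c : ℝ} (hc0 : 0 < c) (hc1 : c < 1) :
    IntegrableOn (fun u : ℝ => u ^ (c-1) * (1-u) ^ (-c)) (Set.Ioo 0 1) := by
  have h1c : (0:ℝ) < 1 - c := by linarith
  have hconv := Complex.betaIntegral_convergent (u := (c:ℂ)) (v := ((1-c:ℝ):ℂ))
    (by simpa using hc0) (by simpa using h1c)
  have hIoc : IntegrableOn (fun u : ℝ => (u:ℂ) ^ ((c:ℂ)-1) * (1-(u:ℂ)) ^ (((1-c:ℝ):ℂ)-1))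
      (Set.Ioc 0 1) := (intervalIntegrable_iff_integrableOn_Ioc_of_le (by norm_num)).mp hconv
  have hIoo := hIoc.mono_set Set.Ioo_subset_Ioc_self
  have := hIoo.re
  refine (integrableOn_congr_fun (fun u hu => ?_) measurableSet_Ioo).mpr this
  have hu0 : (0:ℝ) < u := hu.1
  have hu1 : u < 1 := hu.2
  have e1 : ((u:ℂ) ^ ((c:ℂ)-1) * (1-(u:ℂ)) ^ (((1-c:ℝ):ℂ)-1))
      = ((u ^ (c-1) * (1-u) ^ (-c) : ℝ) : ℂ) := by
    push_cast
    rw [Complex.ofReal_cpow hu0.le, Complex.ofReal_cpow (by linarith : (0:ℝ) ≤ 1 - u)]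
    push_cast
    ring_nf
  rw [e1]; simp

section
variable {c a b : ℝ}

theorem affine_setup (hab : a < b) :
    (fun u : ℝ => a + (b-a)*u) '' Set.Ioo 0 1 = Set.Ioo a b ∧
    (∀ u ∈ Set.Ioo (0:ℝ) 1, HasDerivWithinAt (fun u : ℝ => a + (b-a)*u) (b-a) (Set.Ioo 0 1) u) ∧
    Set.InjOn (fun u : ℝ => a + (b-a)*u) (Set.Ioo 0 1) := by
  have hba : (0:ℝ) < b - a := by linarith
  refine ⟨?_, fun u _ => ?_, fun u _ v _ h => ?_⟩
  · have : (fun u : ℝ => a + (b-a)*u) = (fun v => a + v) ∘ (fun u => (b-a)*u) := rfl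
    rw [this, Set.image_comp, Set.image_mul_left_Ioo hba, mul_zero, mul_one,
      Set.image_const_add_Ioo, add_zero]
    norm_num
  · simpa using (((hasDerivAt_id u).const_mul (b-a)).const_add a).hasDerivWithinAt
  · have : (b-a)*u = (b-a)*v := by dsimp at h; linarith
    exact mul_left_cancel₀ hba.ne' this

theorem pt_eq (hc0 : 0 < c) (hab : a < b) (u : ℝ) (hu : u ∈ Set.Ioo (0:ℝ) 1) :
    |b - a| • ((b - (a + (b-a)*u)) ^ (-c) * ((a + (b-a)*u) - a) ^ (c-1))
      = u ^ (c-1) * (1-u) ^ (-c) := by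
  have hba : (0:ℝ) < b - a := by linarith
  have hu0 : (0:ℝ) < u := hu.1
  have hu1 : u < 1 := hu.2
  have e0 : b - (a + (b-a)*u) = (b-a)*(1-u) := by ring
  have e0' : (a + (b-a)*u) - a = (b-a)*u := by ring
  rw [smul_eq_mul, e0, e0', abs_of_pos hba,
    Real.mul_rpow hba.le (by linarith), Real.mul_rpow hba.le hu0.le]
  have e3 : (b-a) * ((b-a)^(-c) * (1-u)^(-c) * ((b-a)^(c-1) * u^(c-1)))
      = ((b-a) * ((b-a)^(-c) * (b-a)^(c-1))) * ((1-u)^(-c) * u^(c-1)) := by ring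
  rw [e3, ← Real.rpow_add hba, show -c + (c-1) = -1 by ring, Real.rpow_neg_one,
    mul_inv_cancel₀ hba.ne', one_mul]
  ring

theorem lemmaA_int (hc0 : 0 < c) (hc1 : c < 1) (hab : a < b) :
    IntegrableOn (fun s : ℝ => (b-s) ^ (-c) * (s-a) ^ (c-1)) (Set.Ioo a b) := by
  obtain ⟨himg, hderiv, hinj⟩ := affine_setup hab
  rw [← himg, integrableOn_image_iff_integrableOn_abs_deriv_smul measurableSet_Ioo hderiv hinj]
  refine (integrableOn_congr_fun (fun u hu => pt_eq hc0 hab u hu) measurableSet_Ioo).mpr ?_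
  exact beta_integrable hc0 hc1

theorem lemmaA_val (hc0 : 0 < c) (hc1 : c < 1) (hab : a < b) :
    ∫ s in Set.Ioo a b, (b-s) ^ (-c) * (s-a) ^ (c-1)
      = Real.Gamma c * Real.Gamma (1-c) := by
  obtain ⟨himg, hderiv, hinj⟩ := affine_setup hab
  rw [← himg, integral_image_eq_integral_abs_deriv_smul measurableSet_Ioo hderiv hinj,
    setIntegral_congr_fun measurableSet_Ioo (fun u hu => pt_eq hc0 hab u hu)]
  exact beta_real hc0 hc1

end

section
variable {c x t : ℝ}

theorem inv_setup (hx : 0 < x) (hxt : x < t) :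
    (fun σ : ℝ => σ⁻¹) '' Set.Ioo t⁻¹ x⁻¹ = Set.Ioo x t ∧
    (∀ σ ∈ Set.Ioo (t:ℝ)⁻¹ x⁻¹, HasDerivWithinAt (fun σ : ℝ => σ⁻¹) (-(σ^2)⁻¹)
      (Set.Ioo t⁻¹ x⁻¹) σ) ∧
    Set.InjOn (fun σ : ℝ => σ⁻¹) (Set.Ioo t⁻¹ x⁻¹) := by
  have ht0 : (0:ℝ) < t := hx.trans hxt
  have hmem : ∀ σ ∈ Set.Ioo (t:ℝ)⁻¹ x⁻¹, 0 < σ := fun σ hσ => (inv_pos.mpr ht0).trans hσ.1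
  refine ⟨?_, fun σ hσ => ((hasDerivAt_inv (hmem σ hσ).ne').hasDerivWithinAt), ?_⟩
  · ext s
    simp only [Set.mem_image, Set.mem_Ioo]
    constructor
    · rintro ⟨σ, ⟨h1, h2⟩, rfl⟩
      have hσ : 0 < σ := (inv_pos.mpr ht0).trans h1
      have e : σ * σ⁻¹ = 1 := mul_inv_cancel₀ hσ.ne'
      have et : t * t⁻¹ = 1 := mul_inv_cancel₀ ht0.ne'
      have ex : x * x⁻¹ = 1 := mul_inv_cancel₀ hx.ne'
      constructor
      · nlinarith [inv_pos.mpr hσ]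
      · nlinarith [inv_pos.mpr hσ]
    · intro ⟨h1, h2⟩
      have hs : 0 < s := hx.trans h1
      refine ⟨s⁻¹, ⟨?_, ?_⟩, inv_inv s⟩
      · have e : s * s⁻¹ = 1 := mul_inv_cancel₀ hs.ne'
        have et : t * t⁻¹ = 1 := mul_inv_cancel₀ ht0.ne'
        nlinarith [inv_pos.mpr hs, inv_pos.mpr ht0]
      · have e : s * s⁻¹ = 1 := mul_inv_cancel₀ hs.ne'
        have ex : x * x⁻¹ = 1 := mul_inv_cancel₀ hx.ne'
        nlinarith [inv_pos.mpr hs, inv_pos.mpr hx]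
  · exact inv_injective.injOn

theorem pt_eq2 (hc0 : 0 < c) (hx : 0 < x) (hxt : x < t) (σ : ℝ)
    (hσ : σ ∈ Set.Ioo (t:ℝ)⁻¹ x⁻¹) :
    |(-(σ^2)⁻¹)| • ((t - σ⁻¹) ^ (-c) * (σ⁻¹ - x) ^ (c-1) / σ⁻¹)
      = x ^ (c-1) * t ^ (-c) * ((x⁻¹ - σ) ^ (c-1) * (σ - t⁻¹) ^ (-c)) := by
  have ht0 : (0:ℝ) < t := hx.trans hxt
  have hσ0 : 0 < σ := (inv_pos.mpr ht0).trans hσ.1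
  have h1 : 0 < σ - t⁻¹ := sub_pos.mpr hσ.1
  have h2 : 0 < x⁻¹ - σ := sub_pos.mpr hσ.2
  have e1 : t - σ⁻¹ = t * σ⁻¹ * (σ - t⁻¹) := by
    field_simp
  have e2 : σ⁻¹ - x = x * σ⁻¹ * (x⁻¹ - σ) := by
    field_simp
  rw [smul_eq_mul, abs_of_neg (neg_lt_zero.mpr (by positivity) : -(σ^2)⁻¹ < (0:ℝ)), neg_neg, e1, e2,
    Real.mul_rpow (by positivity) h1.le, Real.mul_rpow ht0.le (by positivity),
    Real.mul_rpow (by positivity) h2.le, Real.mul_rpow hx.le (by positivity)]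
  have einv : (σ⁻¹)^(-c) * (σ⁻¹)^(c-1) = σ := by
    rw [← Real.rpow_add (by positivity), show -c + (c-1) = -1 by ring,
      Real.rpow_neg_one, inv_inv]
  have : (σ^2)⁻¹ * (t^(-c) * (σ⁻¹)^(-c) * (σ - t⁻¹)^(-c) * (x^(c-1) * (σ⁻¹)^(c-1) * (x⁻¹-σ)^(c-1)) / σ⁻¹)
      = ((σ^2)⁻¹ * ((σ⁻¹)^(-c) * (σ⁻¹)^(c-1)) / σ⁻¹) * (x^(c-1) * t^(-c) * ((x⁻¹-σ)^(c-1) * (σ-t⁻¹)^(-c))) := by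
    ring
  rw [this, einv]
  have : (σ^2)⁻¹ * σ / σ⁻¹ = 1 := by field_simp
  rw [this, one_mul]

theorem lemmaB_int (hc0 : 0 < c) (hc1 : c < 1) (hx : 0 < x) (hxt : x < t) :
    IntegrableOn (fun s : ℝ => (t-s) ^ (-c) * (s-x) ^ (c-1) / s) (Set.Ioo x t) := by
  obtain ⟨himg, hderiv, hinj⟩ := inv_setup hx hxt
  rw [← himg, integrableOn_image_iff_integrableOn_abs_deriv_smul measurableSet_Ioo hderiv hinj]
  refine (integrableOn_congr_fun (fun σ hσ => pt_eq2 hc0 hx hxt σ hσ) measurableSet_Ioo).mpr ?_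
  exact ((lemmaA_int (by linarith : (0:ℝ) < 1-c) (by linarith)
    (inv_strictAnti₀ hx hxt)).congr_fun (fun σ hσ => by
      norm_num) measurableSet_Ioo).const_mul _

theorem lemmaB_val (hc0 : 0 < c) (hc1 : c < 1) (hx : 0 < x) (hxt : x < t) :
    ∫ s in Set.Ioo x t, (t-s) ^ (-c) * (s-x) ^ (c-1) / s
      = x ^ (c-1) * t ^ (-c) * (Real.Gamma c * Real.Gamma (1-c)) := by
  obtain ⟨himg, hderiv, hinj⟩ := inv_setup hx hxt
  rw [← himg, integral_image_eq_integral_abs_deriv_smul measurableSet_Ioo hderiv hinj,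
    setIntegral_congr_fun measurableSet_Ioo (fun σ hσ => pt_eq2 hc0 hx hxt σ hσ),
    integral_const_mul]
  have := lemmaA_val (c := 1-c) (a := t⁻¹) (b := x⁻¹) (by linarith) (by linarith)
    (inv_strictAnti₀ hx hxt)
  rw [setIntegral_congr_fun measurableSet_Ioo (fun σ hσ => ?_), this]
  · rw [show (1:ℝ) - (1-c) = c by ring]; ring
  · show (x⁻¹ - σ) ^ (c-1) * (σ - t⁻¹) ^ (-c) = (x⁻¹-σ)^(-(1-c)) * (σ-t⁻¹)^((1-c)-1)
    norm_num
end

theorem stmt_3 (c x t : ℝ) (hc0 : 0 < c) (hc1 : c < 1) (hx : 0 < x) (hxt : x < t) :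
    ∫ s in Set.Ioo x t, (t - s) ^ (1 - c) * (s - x) ^ (c - 1) / s
      = ((t / x) ^ (1 - c) - 1) * (Real.Gamma c * Real.Gamma (1 - c)) := by
  have ht0 : (0:ℝ) < t := hx.trans hxt
  have hpt : ∀ s ∈ Set.Ioo x t, (t - s) ^ (1 - c) * (s - x) ^ (c - 1) / s
      = t * ((t-s) ^ (-c) * (s-x) ^ (c-1) / s) - (t-s) ^ (-c) * (s-x) ^ (c-1) := by
    intro s hs
    have hts : (0:ℝ) < t - s := sub_pos.mpr hs.2
    have hs0 : (0:ℝ) < s := hx.trans hs.1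
    rw [show (1:ℝ)-c = -c+1 by ring, Real.rpow_add hts, Real.rpow_one]
    field_simp
  rw [setIntegral_congr_fun measurableSet_Ioo hpt,
    integral_sub ((lemmaB_int hc0 hc1 hx hxt).const_mul t) (lemmaA_int hc0 hc1 hxt),
    MeasureTheory.integral_const_mul, lemmaB_val hc0 hc1 hx hxt, lemmaA_val hc0 hc1 hxt]
  have e : (t/x) ^ (1-c) = t * t^(-c) * x^(c-1) := by
    rw [Real.div_rpow ht0.le hx.le, div_eq_mul_inv, ← Real.rpow_neg hx.le,
      show -(1-c) = c-1 by ring, show (1:ℝ)-c = 1+(-c) by ring, Real.rpow_add ht0,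
      Real.rpow_one]
  rw [e]; ring
end

section
/- Let c in (0,1), y>0, t>0. Define Delta(s) = (y/(y+t-s))^c - (y/(y+t))^c for s in (0,t). Then int_0^t Delta(s) s^{c-2} ds = (1/(1-c)) * ( t^c/(y+t) - t^{c-1}*(1 - (y/(y+t))^c) ). -/
/-!
With `u = y + t` the integrand is `y ^ c * ((u - s) ^ (-c) - u ^ (-c)) * s ^ (c - 2)`, and
`((u - s) ^ (-c) - u ^ (-c)) * s ^ (c - 2)` is the derivative of
`s ^ (c - 1) * (u ^ (1 - c) - (u - s) ^ (1 - c)) / ((1 - c) * u)`.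
Since the integrand is nonnegative, the fundamental theorem of calculus applies (integrability
included) once this antiderivative extends continuously to `s = 0`; there it equals `s ^ c` times
a difference quotient of `s ↦ (u - s) ^ (1 - c)`, hence tends to `0`.
-/

open MeasureTheory Real Set Filter Topology

theorem integral_Ioo_eq_sub_of_hasDerivAt_of_nonneg {f f' : ℝ → ℝ} {a b : ℝ} (hab : a ≤ b)
    (hcont : ContinuousOn f (Icc a b)) (hderiv : ∀ x ∈ Ioo a b, HasDerivAt f (f' x) x)
    (hnonneg : ∀ x ∈ Ioo a b, 0 ≤ f' x) :
    ∫ x in Ioo a b, f' x = f b - f a := by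
  rw [← integral_Ioc_eq_integral_Ioo, ← intervalIntegral.integral_of_le hab]
  exact intervalIntegral.integral_eq_sub_of_hasDerivAt_of_le hab hcont hderiv
    ((intervalIntegrable_iff_integrableOn_Ioc_of_le hab).2
      (intervalIntegral.integrableOn_deriv_of_nonneg hcont hderiv hnonneg))

section

variable {c u : ℝ}

theorem hasDerivAt_rpow_mul_sub_rpow {s : ℝ} (hs : 0 < s) (hsu : s < u) :
    HasDerivAt (fun s => s ^ (c - 1) * (u ^ (1 - c) - (u - s) ^ (1 - c)))
      ((1 - c) * u * (((u - s) ^ (-c) - u ^ (-c)) * s ^ (c - 2))) s := by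
  have hus : 0 < u - s := by linarith
  have hpow : HasDerivAt (fun s => s ^ (c - 1)) ((c - 1) * s ^ (c - 2)) s := by
    simpa only [sub_sub, one_add_one_eq_two] using
      hasDerivAt_rpow_const (p := c - 1) (Or.inl hs.ne')
  have hdiff : HasDerivAt (fun s => u ^ (1 - c) - (u - s) ^ (1 - c))
      ((1 - c) * (u - s) ^ (-c)) s := by
    have := ((hasDerivAt_id s).const_sub u).rpow_const (p := 1 - c) (Or.inl hus.ne')
    refine (this.const_sub (u ^ (1 - c))).congr_deriv ?_
    simp only [id]; ring_nf
  refine (hpow.mul hdiff).congr_deriv ?_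
  rw [show 1 - c = -c + 1 by ring, rpow_add_one hus.ne', rpow_add_one (by linarith : u ≠ 0),
    show c - 1 = c - 2 + 1 by ring, rpow_add_one hs.ne']
  ring

theorem tendsto_rpow_mul_sub_rpow_nhdsGT_zero (hc : 0 < c) (hu : 0 < u) :
    Tendsto (fun s => s ^ (c - 1) * (u ^ (1 - c) - (u - s) ^ (1 - c))) (𝓝[>] 0) (𝓝 0) := by
  have hslope := (((hasDerivAt_id (0 : ℝ)).const_sub u).rpow_const (p := 1 - c)
    (Or.inl (by simpa using hu.ne'))).tendsto_slope_zero_right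
  have hpow : Tendsto (fun s : ℝ => s ^ c) (𝓝[>] 0) (𝓝 0) := by
    simpa [zero_rpow hc.ne'] using
      (continuousAt_rpow_const 0 c (Or.inr hc.le)).tendsto.mono_left nhdsWithin_le_nhds
  have hprod := (hpow.mul hslope).neg
  rw [zero_mul, neg_zero] at hprod
  refine hprod.congr' (eventuallyEq_nhdsWithin_of_eqOn fun s (hs : 0 < s) => ?_)
  simp only [id, zero_add, sub_zero, smul_eq_mul, rpow_sub_one hs.ne']
  field_simp
  ring

theorem continuousOn_rpow_mul_sub_rpow (hc : 0 < c) {t : ℝ} (htu : t < u) :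
    ContinuousOn (fun s => s ^ (c - 1) * (u ^ (1 - c) - (u - s) ^ (1 - c))) (Icc 0 t) := by
  rintro s ⟨hs0, hst⟩
  rcases hs0.eq_or_lt with rfl | hs
  · have hzero : (0 : ℝ) ^ (c - 1) * (u ^ (1 - c) - (u - 0) ^ (1 - c)) = 0 := by simp
    refine (continuousWithinAt_Ioi_iff_Ici.1 ?_).mono Icc_subset_Ici_self
    rw [ContinuousWithinAt, hzero]
    exact tendsto_rpow_mul_sub_rpow_nhdsGT_zero hc (by linarith)
  · exact (hasDerivAt_rpow_mul_sub_rpow (c := c) hs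
      (hst.trans_lt htu)).continuousAt.continuousWithinAt

theorem integral_Ioo_sub_rpow_neg_mul_rpow (hc0 : 0 < c) (hc1 : c ≠ 1) {t : ℝ} (ht : 0 ≤ t)
    (htu : t < u) :
    ∫ s in Ioo 0 t, ((u - s) ^ (-c) - u ^ (-c)) * s ^ (c - 2)
      = t ^ (c - 1) * (u ^ (1 - c) - (u - t) ^ (1 - c)) / ((1 - c) * u) := by
  have hc : 1 - c ≠ 0 := sub_ne_zero.2 hc1.symm
  have hu : u ≠ 0 := by linarith
  rw [integral_Ioo_eq_sub_of_hasDerivAt_of_nonneg ht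
    ((continuousOn_rpow_mul_sub_rpow hc0 htu).div_const ((1 - c) * u))]
  · simp
  · intro s hs
    refine ((hasDerivAt_rpow_mul_sub_rpow hs.1 (hs.2.trans htu)).div_const _).congr_deriv ?_
    field_simp
  · intro s hs
    have hsub : u ^ (-c) ≤ (u - s) ^ (-c) :=
      rpow_le_rpow_of_nonpos (by linarith [hs.2]) (by linarith [hs.1]) (by linarith)
    exact mul_nonneg (sub_nonneg.2 hsub) (rpow_nonneg hs.1.le _)

end

theorem stmt_5 (c y t : ℝ) (hc0 : 0 < c) (hc1 : c < 1) (hy : 0 < y) (ht : 0 < t) :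
    ∫ s in Set.Ioo (0 : ℝ) t,
        ((y / (y + t - s)) ^ c - (y / (y + t)) ^ c) * s ^ (c - 2)
      = (1 / (1 - c)) *
        (t ^ c / (y + t) - t ^ (c - 1) * (1 - (y / (y + t)) ^ c)) := by
  have hyt : 0 < y + t := by linarith
  have hfactor : ∀ s ∈ Ioo 0 t, ((y / (y + t - s)) ^ c - (y / (y + t)) ^ c) * s ^ (c - 2)
      = y ^ c * (((y + t - s) ^ (-c) - (y + t) ^ (-c)) * s ^ (c - 2)) := by
    intro s hs
    rw [div_rpow hy.le (by linarith [hs.2]), div_rpow hy.le hyt.le,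
      rpow_neg (by linarith [hs.2]), rpow_neg hyt.le]
    ring
  rw [setIntegral_congr_fun measurableSet_Ioo hfactor, integral_const_mul,
    integral_Ioo_sub_rpow_neg_mul_rpow hc0 hc1.ne ht.le (by linarith), add_sub_cancel_right]
  have hy_pow : y ^ c * y ^ (1 - c) = y := by
    rw [← rpow_add hy, add_sub_cancel, rpow_one]
  have hyt_pow : y ^ c * (y + t) ^ (1 - c) = (y / (y + t)) ^ c * (y + t) := by
    rw [div_rpow hy.le hyt.le, rpow_sub hyt, rpow_one]
    field_simp
  have ht_pow : t ^ c = t ^ (c - 1) * t := by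
    rw [rpow_sub_one ht.ne']; field_simp
  have hc : 1 - c ≠ 0 := by linarith
  field_simp
  linear_combination t ^ (c - 1) * (hyt_pow - hy_pow) - ht_pow
end

section
/- Let h: [1,infinity) -> R be twice differentiable on (1,infinity), satisfying (1-y) h''(y) = (1 - c - (1-y)/y) h'(y) for y > 1 with h(1) = 1, h(y) -> 0 as y -> infinity, and h' continuous. Then h(x) = (1/B(c,1-c)) * int_0^{1/x} (1-z)^{c-1} z^{-c} dz for all x >= 1. -/
/-!
Writing `g = h'`, the ODE is a first-order linear equation for `g` with integrating factor
`y (y - 1) ^ (1 - c)`, so `h' y = K (y - 1) ^ (c - 1) / y`. This is `-K` times the derivative of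
`F x = ∫ z in 0..x⁻¹, (1 - z) ^ (c - 1) * z ^ (-c)`, hence `h + K F` is constant on `(1, ∞)`,
and the constant is `0` because `h` and `F` both tend to `0` at infinity. Letting `x → 1`, where
`F 1 = B(1 - c, c) = Γ(c) Γ(1 - c)`, gives `K = -1 / (Γ(c) Γ(1 - c))`.
-/

open MeasureTheory Real Set Filter Topology

section Beta

variable {a b : ℝ}

lemma ofReal_rpow_mul_one_sub_rpow {x : ℝ} (hx : x ∈ Icc (0 : ℝ) 1) :
    ((x ^ (a - 1) * (1 - x) ^ (b - 1) : ℝ) : ℂ) =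
      (x : ℂ) ^ (a - 1 : ℂ) * (1 - x : ℂ) ^ (b - 1 : ℂ) := by
  push_cast [Complex.ofReal_cpow hx.1, Complex.ofReal_cpow (sub_nonneg.2 hx.2)]
  rfl

lemma intervalIntegrable_rpow_mul_one_sub_rpow (ha : 0 < a) (hb : 0 < b) :
    IntervalIntegrable (fun x : ℝ => x ^ (a - 1) * (1 - x) ^ (b - 1)) volume 0 1 := by
  have hℂ : IntervalIntegrable (fun x : ℝ => ((x ^ (a - 1) * (1 - x) ^ (b - 1) : ℝ) : ℂ))
      volume 0 1 :=
    (Complex.betaIntegral_convergent (u := a) (v := b) (by simpa) (by simpa)).congr fun x hx =>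
      (ofReal_rpow_mul_one_sub_rpow (Ioc_subset_Icc_self (by simpa using hx))).symm
  exact ⟨hℂ.1.re, hℂ.2.re⟩

lemma integral_rpow_mul_one_sub_rpow (ha : 0 < a) (hb : 0 < b) :
    ∫ x in (0 : ℝ)..1, x ^ (a - 1) * (1 - x) ^ (b - 1) = Gamma a * Gamma b / Gamma (a + b) := by
  have hβ := Complex.Gamma_mul_Gamma_eq_betaIntegral (s := a) (t := b) (by simpa) (by simpa)
  rw [Complex.betaIntegral, ← intervalIntegral.integral_congr fun x hx =>
    ofReal_rpow_mul_one_sub_rpow (a := a) (b := b) (by simpa using hx),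
    intervalIntegral.integral_ofReal, ← Complex.ofReal_add] at hβ
  simp only [Complex.Gamma_ofReal] at hβ
  norm_cast at hβ
  rw [hβ, mul_div_cancel_left₀ _ (Gamma_pos_of_pos (add_pos ha hb)).ne']

end Beta

lemma exists_eq_const_of_hasDerivAt_zero_Ioi {f : ℝ → ℝ} {a : ℝ}
    (hf : ∀ x > a, HasDerivAt f 0 x) : ∃ C, ∀ x > a, f x = C :=
  isOpen_Ioi.exists_is_const_of_deriv_eq_zero isPreconnected_Ioi
    (fun x hx => (hf x hx).differentiableAt.differentiableWithinAt) fun x hx => (hf x hx).deriv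

lemma eq_of_hasDerivAt_zero_of_tendsto_atTop {f : ℝ → ℝ} {a L : ℝ}
    (hf : ∀ x > a, HasDerivAt f 0 x) (hL : Tendsto f atTop (𝓝 L)) : ∀ x > a, f x = L := by
  obtain ⟨C, hC⟩ := exists_eq_const_of_hasDerivAt_zero_Ioi hf
  have hC' : Tendsto f atTop (𝓝 C) :=
    tendsto_const_nhds.congr' <| (eventually_gt_atTop a).mono fun x hx => (hC x hx).symm
  rwa [tendsto_nhds_unique hL hC']

lemma exists_eq_mul_rpow_div_of_ode {c : ℝ} {g g' : ℝ → ℝ}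
    (hg : ∀ y > 1, HasDerivAt g (g' y) y)
    (hode : ∀ y > 1, (1 - y) * g' y = (1 - c - (1 - y) / y) * g y) :
    ∃ K, ∀ y > 1, g y = K * ((y - 1) ^ (c - 1) / y) := by
  have hφ : ∀ y > 1, HasDerivAt (fun y => y * (y - 1) ^ (1 - c) * g y) 0 y := by
    intro y hy
    have hy1 : 0 < y - 1 := sub_pos.2 hy
    have hpow : HasDerivAt (fun y => (y - 1) ^ (1 - c)) ((1 - c) * (y - 1) ^ (-c)) y :=
      (((hasDerivAt_id' y).sub_const 1).rpow_const (p := 1 - c) (Or.inl hy1.ne')).congr_deriv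
        (by rw [sub_sub_cancel_left, one_mul])
    refine (((hasDerivAt_id' y).mul hpow).mul (hg y hy)).congr_deriv ?_
    have hsplit : (y - 1) ^ (1 - c) = (y - 1) * (y - 1) ^ (-c) := by
      rw [show 1 - c = 1 + -c by ring, rpow_add hy1, rpow_one]
    have hode' : y * (1 - y) * g' y = ((1 - c) * y - (1 - y)) * g y := by
      rw [mul_assoc, hode y hy]
      field_simp
    simp only [Pi.mul_apply, hsplit]
    linear_combination (-(y - 1) ^ (-c)) * hode'
  obtain ⟨K, hK⟩ := exists_eq_const_of_hasDerivAt_zero_Ioi hφ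
  refine ⟨K, fun y hy => ?_⟩
  have hy1 : 0 < y - 1 := sub_pos.2 hy
  rw [← hK y hy, show c - 1 = -(1 - c) by ring, rpow_neg hy1.le]
  field_simp

section Primitive

variable {f : ℝ → ℝ}

lemma continuousOn_integral_inv (hf : IntervalIntegrable f volume 0 1) :
    ContinuousOn (fun x => ∫ z in (0 : ℝ)..x⁻¹, f z) (Ici 1) :=
  (intervalIntegral.continuousOn_primitive_interval' hf left_mem_uIcc).comp
    (continuousOn_inv₀.mono fun x (hx : 1 ≤ x) => (zero_lt_one.trans_le hx).ne')
    fun x (hx : 1 ≤ x) => by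
      rw [uIcc_of_le zero_le_one]
      exact ⟨inv_nonneg.2 (zero_le_one.trans hx), inv_le_one_of_one_le₀ hx⟩

lemma tendsto_integral_inv_atTop (hf : IntervalIntegrable f volume 0 1) :
    Tendsto (fun x => ∫ z in (0 : ℝ)..x⁻¹, f z) atTop (𝓝 0) := by
  have hinv : Tendsto (fun x : ℝ => x⁻¹) atTop (𝓝[uIcc 0 1] 0) := by
    refine tendsto_nhdsWithin_iff.2 ⟨tendsto_inv_atTop_zero, ?_⟩
    filter_upwards [eventually_ge_atTop 1] with x hx
    rw [uIcc_of_le zero_le_one]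
    exact ⟨inv_nonneg.2 (zero_le_one.trans hx), inv_le_one_of_one_le₀ hx⟩
  have hF := ((intervalIntegral.continuousOn_primitive_interval' hf left_mem_uIcc) 0
    left_mem_uIcc).tendsto.comp hinv
  simpa [Function.comp_def] using hF

end Primitive

section Kernel

variable {c : ℝ}

lemma intervalIntegrable_one_sub_rpow_mul_rpow_neg (hc0 : 0 < c) (hc1 : c < 1) :
    IntervalIntegrable (fun z : ℝ => (1 - z) ^ (c - 1) * z ^ (-c)) volume 0 1 := by
  simpa [mul_comm] using intervalIntegrable_rpow_mul_one_sub_rpow (sub_pos.2 hc1) hc0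

lemma integral_one_sub_rpow_mul_rpow_neg (hc0 : 0 < c) (hc1 : c < 1) :
    ∫ z in (0 : ℝ)..1, (1 - z) ^ (c - 1) * z ^ (-c) = Gamma c * Gamma (1 - c) := by
  simpa [mul_comm] using integral_rpow_mul_one_sub_rpow (sub_pos.2 hc1) hc0

lemma hasDerivAt_integral_one_sub_rpow_mul_rpow_neg_inv (hc0 : 0 < c) (hc1 : c < 1) {x : ℝ}
    (hx : 1 < x) :
    HasDerivAt (fun x => ∫ z in (0 : ℝ)..x⁻¹, (1 - z) ^ (c - 1) * z ^ (-c))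
      (-((x - 1) ^ (c - 1) / x)) x := by
  have hx0 : 0 < x := zero_lt_one.trans hx
  have hx1 : 0 < x - 1 := sub_pos.2 hx
  have hxinv : x⁻¹ < 1 := inv_lt_one_of_one_lt₀ hx
  have hint : IntervalIntegrable (fun z : ℝ => (1 - z) ^ (c - 1) * z ^ (-c)) volume 0 x⁻¹ :=
    (intervalIntegrable_one_sub_rpow_mul_rpow_neg hc0 hc1).mono_set <| by
      rw [uIcc_of_le (inv_nonneg.2 hx0.le), uIcc_of_le zero_le_one]
      exact Icc_subset_Icc le_rfl hxinv.le
  have hmeas : Measurable fun z : ℝ => (1 - z) ^ (c - 1) * z ^ (-c) := by fun_prop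
  have hFTC := intervalIntegral.integral_hasDerivAt_right hint
    hmeas.stronglyMeasurable.stronglyMeasurableAtFilter
    (by fun_prop (disch := simp [sub_ne_zero, hxinv.ne', hx0.ne']))
  refine (hFTC.comp x (hasDerivAt_inv hx0.ne')).congr_deriv ?_
  have hsub : 1 - x⁻¹ = (x - 1) * x⁻¹ := by field_simp
  have hpow : x⁻¹ ^ (c - 1) * x⁻¹ ^ (-c) = x := by
    rw [← rpow_add (inv_pos.2 hx0), show c - 1 + -c = -1 by ring, rpow_neg_one, inv_inv]
  rw [hsub, mul_rpow hx1.le (inv_nonneg.2 hx0.le), mul_assoc, mul_assoc,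
    ← mul_assoc (x⁻¹ ^ (c - 1)), hpow]
  field_simp

end Kernel

theorem stmt_6_general (c : ℝ) (hc0 : 0 < c) (hc1 : c < 1)
    (h h' h'' : ℝ → ℝ)
    (hderiv : ∀ y > 1, HasDerivAt h (h' y) y)
    (hderiv2 : ∀ y > 1, HasDerivAt h' (h'' y) y)
    (hcont : ContinuousOn h (Set.Ici 1))
    (hODE : ∀ y > 1, (1 - y) * h'' y = (1 - c - (1 - y) / y) * h' y)
    (hinit : h 1 = 1)
    (hlim : Tendsto h atTop (nhds 0)) :
    ∀ x ≥ 1, h x =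
      (1 / (Real.Gamma c * Real.Gamma (1 - c))) *
        ∫ z in Set.Ioo (0 : ℝ) (1 / x), (1 - z) ^ (c - 1) * z ^ (-c) := by
  set F : ℝ → ℝ := fun x => ∫ z in (0 : ℝ)..x⁻¹, (1 - z) ^ (c - 1) * z ^ (-c)
  have hf := intervalIntegrable_one_sub_rpow_mul_rpow_neg hc0 hc1
  obtain ⟨K, hK⟩ := exists_eq_mul_rpow_div_of_ode hderiv2 hODE
  have hzero : ∀ x > 1, h x + K * F x = 0 := by
    refine eq_of_hasDerivAt_zero_of_tendsto_atTop (fun x hx => ?_) ?_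
    · exact ((hderiv x hx).add
        ((hasDerivAt_integral_one_sub_rpow_mul_rpow_neg_inv hc0 hc1 hx).const_mul K)).congr_deriv
        (by rw [hK x hx]; ring)
    · simpa using hlim.add ((tendsto_integral_inv_atTop hf).const_mul K)
  have hzero' : EqOn (fun x => h x + K * F x) 0 (Ici 1) :=
    EqOn.of_subset_closure hzero (hcont.add ((continuousOn_integral_inv hf).const_smul K))
      continuousOn_const Ioi_subset_Ici_self (closure_Ioi (1 : ℝ)).ge
  have hΓc := (Gamma_pos_of_pos hc0).ne'
  have hΓc' := (Gamma_pos_of_pos (sub_pos.2 hc1)).ne'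
  have hK_eq : K = -(Gamma c * Gamma (1 - c))⁻¹ := by
    have := hzero' (self_mem_Ici (a := (1 : ℝ)))
    simp only [F, inv_one, integral_one_sub_rpow_mul_rpow_neg hc0 hc1, hinit, Pi.zero_apply] at this
    field_simp
    linarith
  intro x hx
  have hx' : h x + K * F x = 0 := hzero' hx
  rw [← integral_Ioc_eq_integral_Ioo, ← intervalIntegral.integral_of_le
    (one_div_nonneg.2 (zero_le_one.trans hx)), one_div, one_div]
  simp only [F, hK_eq] at hx'
  linarith

theorem stmt_6 (c : ℝ) (hc0 : 0 < c) (hc1 : c < 1)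
    (h h' h'' : ℝ → ℝ)
    (hderiv : ∀ y > 1, HasDerivAt h (h' y) y)
    (hderiv2 : ∀ y > 1, HasDerivAt h' (h'' y) y)
    (h'cont : ContinuousOn h' (Set.Ioi 1))
    (hcont : ContinuousOn h (Set.Ici 1))
    (hODE : ∀ y > 1, (1 - y) * h'' y = (1 - c - (1 - y) / y) * h' y)
    (hinit : h 1 = 1)
    (hlim : Tendsto h atTop (nhds 0)) :
    ∀ x ≥ 1, h x =
      (1 / (Real.Gamma c * Real.Gamma (1 - c))) *
        ∫ z in Set.Ioo (0 : ℝ) (1 / x), (1 - z) ^ (c - 1) * z ^ (-c) :=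
  stmt_6_general c hc0 hc1 h h' h'' hderiv hderiv2 hcont hODE hinit hlim
end

section
/- Let p_k in [0,1], k >= 0, with p_0 < 1 (i.e., P(eta > x_0) > 0), and let q_n >= 0 be probability masses satisfying sum_{n>=j} q_n = 1 - p_j for each j >= 0 and sum_n q_n = 1 - p_0. Then sum_{n=0}^infty (1 + sum_{j=1}^n prod_{k=0}^{j-1} p_k) * q_n = 1 - lim_{N->infty} prod_{k=0}^N p_k. -/
open Filter

theorem stmt_8 (p q : ℕ → ℝ) (L : ℝ)
    (hp : ∀ k, p k ∈ Set.Icc (0 : ℝ) 1) (hp0 : p 0 < 1)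
    (hq : ∀ n, 0 ≤ q n)
    (hqp : ∀ j : ℕ, ∑' n : ℕ, q (n + j) = 1 - p j)
    (hL : Tendsto (fun N : ℕ => ∏ k ∈ Finset.range (N + 1), p k) atTop (nhds L)) :
    ∑' n : ℕ,
        (1 + ∑ j ∈ Finset.Icc 1 n, ∏ k ∈ Finset.range j, p k) * q n
      = 1 - L := by
  classical
  set P : ℕ → ℝ := fun j => ∏ k ∈ Finset.range j, p k with hPdef
  have hP0 : ∀ j, 0 ≤ P j := fun j => Finset.prod_nonneg fun k _ => (hp k).1
  have hPsucc : ∀ j, P (j + 1) = P j * p j := fun j => Finset.prod_range_succ p j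
  -- q is summable
  have hq0 : ∑' n, q n = 1 - p 0 := by simpa using hqp 0
  have hqs : Summable q := by
    by_contra h
    rw [tsum_eq_zero_of_not_summable h] at hq0
    linarith
  -- the doubly-indexed family
  set f : ℕ → ℕ → ℝ := fun j n => if j ≤ n then P j * q n else 0 with hfdef
  have hf0 : ∀ j n, 0 ≤ f j n := by
    intro j n
    simp only [hfdef]
    split
    · exact mul_nonneg (hP0 _) (hq _)
    · exact le_refl _
  -- each row is summable with sum P j * (1 - p j)
  have hrow_s : ∀ j, Summable (f j) := by
    intro j
    refine Summable.of_nonneg_of_le (hf0 j) (fun n => ?_) (hqs.mul_left (P j))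
    simp only [hfdef]
    split
    · exact le_refl _
    · exact mul_nonneg (hP0 j) (hq n)
  have hrow : ∀ j, ∑' n, f j n = P j - P (j + 1) := by
    intro j
    have h1 : (∑ i ∈ Finset.range j, f j i) + ∑' i, f j (i + j) = ∑' i, f j i :=
      Summable.sum_add_tsum_nat_add j (hrow_s j)
    have h2 : ∑ i ∈ Finset.range j, f j i = 0 := by
      apply Finset.sum_eq_zero
      intro i hi
      have : ¬ j ≤ i := by
        rw [Finset.mem_range] at hi; omega
      simp [hfdef, this]
    have h3 : ∀ i, f j (i + j) = P j * q (i + j) := by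
      intro i
      have : j ≤ i + j := Nat.le_add_left j i
      simp [hfdef, this]
    have h4 : ∑' i, f j (i + j) = P j * (1 - p j) := by
      simp only [h3]
      rw [tsum_mul_left, hqp j]
    rw [h2, h4, zero_add] at h1
    rw [← h1, hPsucc j]
    ring
  -- the differences are summable
  have hPmono : ∀ j, P (j + 1) ≤ P j := by
    intro j
    rw [hPsucc j]
    nlinarith [hP0 j, (hp j).1, (hp j).2]
  have hd_nonneg : ∀ j, 0 ≤ P j - P (j + 1) := fun j => sub_nonneg.2 (hPmono j)
  have hd_s : Summable fun j => P j - P (j + 1) := by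
    apply summable_of_sum_range_le hd_nonneg (c := 1)
    intro n
    rw [Finset.sum_range_sub' P n]
    have hP00 : P 0 = 1 := by simp [hPdef]
    have := hP0 n
    linarith
  -- summability of the uncurried family
  have hF : Summable (Function.uncurry f) := by
    refine (summable_prod_of_nonneg (fun x => hf0 x.1 x.2)).2 ⟨fun j => hrow_s j, ?_⟩
    have : (fun j => ∑' n, (Function.uncurry f) (j, n)) = fun j => P j - P (j + 1) := by
      funext j; exact hrow j
    exact this ▸ hd_s
  -- evaluate columns
  have hcol : ∀ n, ∑' j, f j n = (1 + ∑ j ∈ Finset.Icc 1 n, P j) * q n := by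
    intro n
    have h1 : ∑' j, f j n = ∑ j ∈ Finset.range (n + 1), f j n := by
      apply tsum_eq_sum
      intro j hj
      have : ¬ j ≤ n := by
        rw [Finset.mem_range] at hj; omega
      simp [hfdef, this]
    have h2 : ∀ j ∈ Finset.range (n + 1), f j n = P j * q n := by
      intro j hj
      rw [Finset.mem_range] at hj
      have : j ≤ n := by omega
      simp [hfdef, this]
    rw [h1, Finset.sum_congr rfl h2, ← Finset.sum_mul]
    congr 1
    have hins : Finset.range (n + 1) = insert 0 (Finset.Icc 1 n) := by
      ext x
      simp only [Finset.mem_range, Finset.mem_insert, Finset.mem_Icc]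
      omega
    rw [hins, Finset.sum_insert (by simp)]
    simp [hPdef]
  -- total sum via telescoping
  have htel : ∑' j, (P j - P (j + 1)) = 1 - L := by
    have h1 : Tendsto (fun N => ∑ j ∈ Finset.range N, (P j - P (j + 1))) atTop
        (nhds (∑' j, (P j - P (j + 1)))) := hd_s.hasSum.tendsto_sum_nat
    have hP00 : P 0 = 1 := by simp [hPdef]
    have h2 : (fun N => ∑ j ∈ Finset.range N, (P j - P (j + 1))) = fun N => 1 - P N := by
      funext N
      rw [Finset.sum_range_sub' P N, hP00]
    have hPL : Tendsto P atTop (nhds L) := by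
      have : Tendsto (fun N : ℕ => P (N + 1)) atTop (nhds L) := hL
      exact (tendsto_add_atTop_iff_nat 1).1 this
    have h3 : Tendsto (fun N => 1 - P N) atTop (nhds (1 - L)) :=
      tendsto_const_nhds.sub hPL
    rw [h2] at h1
    exact tendsto_nhds_unique h1 h3
  -- put everything together
  have hswap : ∑' (n) (j), f j n = ∑' (j) (n), f j n := Summable.tsum_comm hF
  calc ∑' n : ℕ, (1 + ∑ j ∈ Finset.Icc 1 n, ∏ k ∈ Finset.range j, p k) * q n
      = ∑' (n) (j), f j n := by
        apply tsum_congr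
        intro n
        rw [hcol n]
    _ = ∑' (j) (n), f j n := hswap
    _ = ∑' j, (P j - P (j + 1)) := tsum_congr hrow
    _ = 1 - L := htel
end

section
/- Consider the random exchange process R_n = max(R_{n-1} - 1, eta_n) with i.i.d. innovations eta_n, started at R_0 = x, and the hitting time T = inf{n >= 1 : R_n <= x_0}, where P(eta_1 <= x_0) P(eta_1 > x_0) > 0 and E[eta_1^+] < infinity. Then for x in (x_0 + n, x_0 + n + 1], n >= 0, E_x[T] = (1 + sum_{j=1}^{n} prod_{k=0}^{j-1} P(eta_1 <= x_0 + k)) / prod_{k=0}^{infty} P(eta_1 <= x_0 + k). -/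
/-!
Unrolling the recursion gives `R_i = max (x - i) (max_{j<i} (η_j - (i - 1 - j)))`. Call `i`
*quiet* if `η_j ≤ x₀ + (i - 1 - j)` for all `j < i`. For `x ∈ (x₀ + n, x₀ + n + 1]` the event
`T > m` says exactly that the last quiet time `i ≤ m` is at most `n`.

Splitting at the last quiet time `i`, the event `{last quiet time ≤ m is i}` is the intersection
of `{i is quiet}`, which depends on `η_0, …, η_{i-1}` and has probability
`π_i = ∏_{k<i} P(η ≤ x₀ + k)`, with an independent shifted copy of `{last quiet time ≤ m - i is 0}`,
of probability `u_{m-i}`. Summing over `i` gives the renewal equation `∑_{i≤m} π_i u_{m-i} = 1`,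
and `P(T > m) = ∑_{i ≤ min n m} π_i u_{m-i}`. Since `π` decreases to `L > 0`, dominated
convergence in the renewal equation gives `∑ u = 1 / L`, and summing over `m` gives
`E T = (∑_{i≤n} π_i) / L`.
-/

open MeasureTheory Filter ProbabilityTheory

def IsQuiet (c y : ℕ → ℝ) (i : ℕ) : Prop := ∀ j < i, y j ≤ c (i - 1 - j)

open scoped Classical in
noncomputable def lastQuiet (c y : ℕ → ℝ) (m : ℕ) : ℕ := Nat.findGreatest (IsQuiet c y) m

section Pathwise

variable {c y : ℕ → ℝ} {i i' m a : ℕ}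

lemma isQuiet_succ : IsQuiet c y (i + 1) ↔ IsQuiet (fun k => c (k + 1)) y i ∧ y i ≤ c 0 := by
  have hidx : ∀ j < i, i + 1 - 1 - j = i - 1 - j + 1 := fun j hj => by omega
  refine ⟨fun h => ⟨fun j hj => ?_, by simpa using h i i.lt_succ_self⟩, fun ⟨h, hi⟩ j hj => ?_⟩
  · simpa only [hidx j hj] using h j (by omega)
  · rcases Nat.lt_succ_iff_lt_or_eq.mp hj with hj | rfl
    · simpa only [hidx j hj] using h j hj
    · simpa using hi

lemma isQuiet_iff_of_le (hc : Monotone c) (h : IsQuiet c y i) (hii' : i ≤ i') :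
    IsQuiet c y i' ↔ IsQuiet c (fun j => y (i + j)) (i' - i) := by
  refine ⟨fun h' j hj => ?_, fun h' j hj => ?_⟩
  · simpa [show i' - 1 - (i + j) = i' - i - 1 - j by omega] using h' (i + j) (by omega)
  · by_cases hji : j < i
    · exact (h j hji).trans (hc (by omega))
    · simpa [show i' - i - 1 - (j - i) = i' - 1 - j by omega, show i + (j - i) = j by omega]
        using h' (j - i) (by omega)

lemma lastQuiet_le : lastQuiet c y m ≤ m := by
  classical
  exact Nat.findGreatest_le m

lemma lastQuiet_le_iff : lastQuiet c y m ≤ a ↔ ∀ i, a < i → i ≤ m → ¬ IsQuiet c y i := by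
  classical
  unfold lastQuiet
  refine ⟨fun h i hai him => Nat.findGreatest_is_greatest (by omega) him, fun h => ?_⟩
  by_contra! hlt
  exact h _ hlt (Nat.findGreatest_le m) (Nat.findGreatest_of_ne_zero rfl (by omega))

lemma lastQuiet_eq_iff (hc : Monotone c) (him : i ≤ m) :
    lastQuiet c y m = i ↔ IsQuiet c y i ∧ lastQuiet c (fun j => y (i + j)) (m - i) = 0 := by
  classical
  have hQuiet0 : IsQuiet c y 0 := fun j hj => absurd hj (Nat.not_lt_zero j)
  rw [lastQuiet, Nat.findGreatest_eq_iff, ← Nat.le_zero, lastQuiet_le_iff]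
  refine ⟨fun ⟨_, hi, hgt⟩ => ?_, fun ⟨hi, hgt⟩ => ⟨him, fun _ => hi, fun i' hii' hi'm => ?_⟩⟩
  · have hi : IsQuiet c y i := by rcases i with _ | i; exacts [hQuiet0, hi (by omega)]
    refine ⟨hi, fun k hk hkm => ?_⟩
    have := isQuiet_iff_of_le hc hi (Nat.le_add_right i k)
    rw [Nat.add_sub_cancel_left] at this
    rw [← this]
    exact hgt (by omega) (by omega)
  · rw [isQuiet_iff_of_le hc hi hii'.le]
    exact hgt _ (by omega) (by omega)

lemma lt_iff_not_isQuiet_of_recursion {R : ℕ → ℝ} {x : ℝ} (hR0 : R 0 = x)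
    (hRs : ∀ m, R (m + 1) = max (R m - 1) (y m)) (i : ℕ) (t : ℝ) :
    t < R i ↔ t < x - i ∨ ¬ IsQuiet (fun k => t + k) y i := by
  induction i generalizing t with
  | zero => simp [hR0, IsQuiet]
  | succ i ih =>
    have hshift : (fun k : ℕ => t + ((k + 1 : ℕ) : ℝ)) = fun k : ℕ => (t + 1) + k := by
      funext k; push_cast; ring
    rw [hRs, lt_max_iff, lt_sub_iff_add_lt, ih, isQuiet_succ, hshift]
    push_cast
    constructor
    · rintro ((h | h) | h)
      · exact Or.inl (by linarith)
      · exact Or.inr fun h' => h h'.1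
      · exact Or.inr fun h' => by linarith [h'.2]
    · rintro (h | h)
      · exact Or.inl (Or.inl (by linarith))
      · by_cases h' : IsQuiet (fun k : ℕ => t + 1 + k) y i
        · exact Or.inr (by simpa using fun hy => h ⟨h', hy⟩)
        · exact Or.inl (Or.inr h')

lemma forall_lt_iff_lastQuiet_le {R : ℕ → ℝ} {x x0 : ℝ} {n : ℕ} (hR0 : R 0 = x)
    (hRs : ∀ m, R (m + 1) = max (R m - 1) (y m)) (hx : x ∈ Set.Ioc (x0 + n) (x0 + n + 1))
    (m : ℕ) : (∀ i, 1 ≤ i → i ≤ m → x0 < R i) ↔ lastQuiet (fun k => x0 + k) y m ≤ n := by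
  simp_rw [lastQuiet_le_iff, lt_iff_not_isQuiet_of_recursion hR0 hRs]
  obtain ⟨hxn, hxn1⟩ := hx
  refine ⟨fun h i hni him => (h i (by omega) him).resolve_left ?_, fun h i hi1 him => ?_⟩
  · have : (n : ℝ) + 1 ≤ i := by exact_mod_cast hni
    linarith
  · by_cases hin : i ≤ n
    · have : (i : ℝ) ≤ n := by exact_mod_cast hin
      exact Or.inl (by linarith)
    · exact Or.inr (h i (by omega) him)

end Pathwise

lemma measurableSet_isQuiet (c : ℕ → ℝ) (i : ℕ) :
    MeasurableSet {y : ℕ → ℝ | IsQuiet c y i} := by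
  simp only [IsQuiet, Set.ofPred_forall]
  exact MeasurableSet.iInter fun j => MeasurableSet.iInter fun _ =>
    measurableSet_le (measurable_pi_apply j) measurable_const

lemma measurable_lastQuiet (c : ℕ → ℝ) (m : ℕ) :
    Measurable fun y : ℕ → ℝ => lastQuiet c y m := by
  classical
  exact measurable_findGreatest fun i _ => measurableSet_isQuiet c i

section Probability

variable {Ω : Type*} [MeasurableSpace Ω] {μ : Measure Ω} {η : ℕ → Ω → ℝ}

lemma measure_shift_preimage (hmeas : ∀ n, Measurable (η n)) (hindep : iIndepFun η μ)
    (hident : ∀ n, IdentDistrib (η n) (η 0) μ μ) (i : ℕ) {A : Set (ℕ → ℝ)}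
    (hA : MeasurableSet A) :
    μ ((fun ω j => η (i + j) ω) ⁻¹' A) = μ ((fun ω j => η j ω) ⁻¹' A) := by
  have hlaw : ∀ i, μ.map (fun ω j => η (i + j) ω) = Measure.infinitePi fun _ => μ.map (η 0) :=
    fun i => by
      rw [(hindep.precomp (add_right_injective i)).map_fun_eq_infinitePi_map fun j => hmeas _]
      simp_rw [(hident _).map_eq]
  have h0 := hlaw 0
  simp only [zero_add] at h0
  rw [← Measure.map_apply (measurable_pi_lambda _ fun j => hmeas _) hA, hlaw, ← h0,
    Measure.map_apply (measurable_pi_lambda _ hmeas) hA]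

lemma measure_isQuiet (hindep : iIndepFun η μ) (hident : ∀ n, IdentDistrib (η n) (η 0) μ μ)
    (c : ℕ → ℝ) (i : ℕ) :
    μ {ω | IsQuiet c (fun j => η j ω) i} = ∏ k ∈ Finset.range i, μ {ω | η 0 ω ≤ c k} := by
  have hset : {ω | IsQuiet c (fun j => η j ω) i}
      = ⋂ j ∈ Finset.range i, η j ⁻¹' Set.Iic (c (i - 1 - j)) := by
    ext; simp [IsQuiet]
  rw [hset, hindep.meas_biInter fun j _ => ⟨_, measurableSet_Iic, rfl⟩,
    ← Finset.prod_range_reflect (fun k => μ {ω | η 0 ω ≤ c k})]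
  exact Finset.prod_congr rfl fun j _ => (hident j).measure_mem_eq measurableSet_Iic

lemma measure_lastQuiet_eq (hmeas : ∀ n, Measurable (η n))
    (hindep : iIndepFun η μ) (hident : ∀ n, IdentDistrib (η n) (η 0) μ μ) {c : ℕ → ℝ}
    (hc : Monotone c) {i m : ℕ} (him : i ≤ m) :
    μ {ω | lastQuiet c (fun j => η j ω) m = i}
      = (∏ k ∈ Finset.range i, μ {ω | η 0 ω ≤ c k})
        * μ {ω | lastQuiet c (fun j => η j ω) (m - i) = 0} := by
  let 𝓕 : Set ℕ → MeasurableSpace Ω :=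
    fun S => ⨆ j ∈ S, MeasurableSpace.comap (η j) inferInstance
  have hindep' : Indep (𝓕 (Set.Iio i)) (𝓕 (Set.Ici i)) μ :=
    indep_iSup_of_disjoint (fun j => (hmeas j).comap_le) hindep.iIndep
      (Set.Iio_disjoint_Ici le_rfl)
  have hpast : MeasurableSet[𝓕 (Set.Iio i)] {ω | IsQuiet c (fun j => η j ω) i} := by
    simp only [IsQuiet, Set.ofPred_forall]
    exact MeasurableSet.iInter fun j => MeasurableSet.iInter fun hj =>
      le_iSup₂ (f := fun j (_ : j ∈ Set.Iio i) => MeasurableSpace.comap (η j) inferInstance) j hj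
        _ ⟨Set.Iic _, measurableSet_Iic, rfl⟩
  have hfuture : Measurable[𝓕 (Set.Ici i)] fun ω j => η (i + j) ω :=
    @measurable_pi_lambda _ _ _ (𝓕 (Set.Ici i)) _ _ fun j => Measurable.of_comap_le <|
      le_iSup₂ (f := fun j (_ : j ∈ Set.Ici i) => MeasurableSpace.comap (η j) inferInstance)
        (i + j) (Nat.le_add_right i j)
  have hsplit : {ω | lastQuiet c (fun j => η j ω) m = i}
      = {ω | IsQuiet c (fun j => η j ω) i}
        ∩ (fun ω j => η (i + j) ω) ⁻¹' {y | lastQuiet c y (m - i) = 0} := by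
    ext ω
    exact lastQuiet_eq_iff hc him
  have hzero : MeasurableSet {y : ℕ → ℝ | lastQuiet c y (m - i) = 0} :=
    measurable_lastQuiet c (m - i) (measurableSet_singleton 0)
  rw [hsplit, (Indep_iff _ _ μ).mp hindep' _ _ hpast (hfuture hzero),
    measure_isQuiet hindep hident, measure_shift_preimage hmeas hindep hident i hzero]
  rfl

lemma sum_measure_lastQuiet_eq (hmeas : ∀ n, Measurable (η n)) (c : ℕ → ℝ) (m a : ℕ) :
    ∑ i ∈ Finset.range (a + 1), μ {ω | lastQuiet c (fun j => η j ω) m = i}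
      = μ {ω | lastQuiet c (fun j => η j ω) m ≤ a} := by
  have hN : Measurable fun ω => lastQuiet c (fun j => η j ω) m :=
    (measurable_lastQuiet c m).comp (measurable_pi_lambda _ hmeas)
  have hpre : {ω | lastQuiet c (fun j => η j ω) m ≤ a}
      = (fun ω => lastQuiet c (fun j => η j ω) m) ⁻¹' ↑(Finset.range (a + 1)) := by
    ext ω
    simp
  rw [hpre, ← sum_measure_preimage_singleton _ fun i _ => hN (measurableSet_singleton i)]
  rfl

lemma toReal_measure_lastQuiet_eq_ite (hmeas : ∀ n, Measurable (η n))
    (hindep : iIndepFun η μ) (hident : ∀ n, IdentDistrib (η n) (η 0) μ μ) {c : ℕ → ℝ}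
    (hc : Monotone c) (m i : ℕ) :
    (μ {ω | lastQuiet c (fun j => η j ω) m = i}).toReal
      = if i ≤ m then (∏ k ∈ Finset.range i, (μ {ω | η 0 ω ≤ c k}).toReal)
          * (μ {ω | lastQuiet c (fun j => η j ω) (m - i) = 0}).toReal else 0 := by
  split_ifs with him
  · rw [measure_lastQuiet_eq hmeas hindep hident hc him, ENNReal.toReal_mul, ENNReal.toReal_prod]
  · have hempty : {ω | lastQuiet c (fun j => η j ω) m = i} = ∅ :=
      Set.eq_empty_of_forall_notMem fun ω h => him (h ▸ lastQuiet_le)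
    simp [hempty]

lemma sum_range_prod_mul_measure_lastQuiet_eq_one [IsProbabilityMeasure μ]
    (hmeas : ∀ n, Measurable (η n)) (hindep : iIndepFun η μ)
    (hident : ∀ n, IdentDistrib (η n) (η 0) μ μ) {c : ℕ → ℝ} (hc : Monotone c) (m : ℕ) :
    ∑ i ∈ Finset.range (m + 1), (∏ k ∈ Finset.range i, (μ {ω | η 0 ω ≤ c k}).toReal)
      * (μ {ω | lastQuiet c (fun j => η j ω) (m - i) = 0}).toReal = 1 := by
  rw [← Finset.sum_congr rfl fun i hi =>
      (toReal_measure_lastQuiet_eq_ite hmeas hindep hident hc m i).trans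
        (if_pos (Nat.lt_succ_iff.mp (Finset.mem_range.mp hi))),
    ← ENNReal.toReal_sum fun _ _ => measure_ne_top _ _, sum_measure_lastQuiet_eq hmeas]
  simp [lastQuiet_le]

end Probability

section Renewal

open Finset

lemma sum_range_succ_eq_add_sum_Icc (f : ℕ → ℝ) (n : ℕ) :
    ∑ i ∈ range (n + 1), f i = f 0 + ∑ j ∈ Icc 1 n, f j := by
  rw [sum_range_succ', ← Ico_add_one_right_eq_Icc, sum_Ico_eq_sum_range, add_comm]
  simp [add_comm]

lemma antitone_prod_range {p : ℕ → ℝ} (h0 : ∀ k, 0 ≤ p k) (h1 : ∀ k, p k ≤ 1) :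
    Antitone fun j => ∏ k ∈ range j, p k :=
  antitone_nat_of_succ_le fun j => by
    rw [prod_range_succ]
    exact mul_le_of_le_one_right (prod_nonneg fun k _ => h0 k) (h1 j)

lemma hasSum_inv_of_sum_range_mul_eq_one {π u : ℕ → ℝ} {L : ℝ} (hπ : Antitone π)
    (hπL : Tendsto π atTop (nhds L)) (hL : 0 < L) (hu : ∀ s, 0 ≤ u s)
    (h : ∀ m, ∑ i ∈ range (m + 1), π i * u (m - i) = 1) : HasSum u L⁻¹ := by
  have hLπ : ∀ i, L ≤ π i := hπ.le_of_tendsto hπL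
  have h' : ∀ m, ∑ s ∈ range (m + 1), π (m - s) * u s = 1 := fun m => by
    rw [← h m, ← sum_range_reflect]
    refine sum_congr rfl fun s hs => ?_
    rw [mem_range] at hs
    rw [show m + 1 - 1 - s = m - s by omega, show m - (m - s) = s by omega]
  have hsum : Summable u := by
    refine summable_of_sum_range_le hu (c := L⁻¹) fun m => ?_
    rw [← one_div, le_div_iff₀ hL, ← h' m, sum_mul]
    calc ∑ s ∈ range m, u s * L ≤ ∑ s ∈ range (m + 1), u s * L :=
          sum_le_sum_of_subset_of_nonneg (range_subset_range.mpr m.le_succ)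
            fun s _ _ => mul_nonneg (hu s) hL.le
      _ ≤ ∑ s ∈ range (m + 1), π (m - s) * u s :=
          sum_le_sum fun s _ => by rw [mul_comm]; exact mul_le_mul_of_nonneg_right (hLπ _) (hu s)
  -- Tannery's theorem, with the summable bound `π 0 * u`, lets `m → ∞` inside the convolution.
  let f : ℕ → ℕ → ℝ := fun m s => if s ≤ m then π (m - s) * u s else 0
  have hf : ∀ m, ∑' s, f m s = 1 := fun m => by
    rw [tsum_eq_sum (s := range (m + 1)) fun s hs => if_neg (by simpa using hs), ← h' m]
    exact sum_congr rfl fun s hs => if_pos (by simpa [Nat.lt_succ_iff] using hs)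
  have hlim : Tendsto (fun m => ∑' s, f m s) atTop (nhds (∑' s, L * u s)) := by
    refine tendsto_tsum_of_dominated_convergence (bound := fun s => π 0 * u s)
      (hsum.mul_left _) (fun s => ?_) (Eventually.of_forall fun m s => ?_)
    · refine ((hπL.comp (tendsto_sub_atTop_nat s)).mul_const (u s)).congr' ?_
      filter_upwards [eventually_ge_atTop s] with m hm
      exact (if_pos hm).symm
    · simp only [f]
      split_ifs
      · rw [Real.norm_of_nonneg (mul_nonneg (hL.le.trans (hLπ _)) (hu s))]
        exact mul_le_mul_of_nonneg_right (hπ (Nat.zero_le _)) (hu s)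
      · simpa using mul_nonneg (hL.le.trans (hLπ 0)) (hu s)
  have hLU : L * ∑' s, u s = 1 := by
    rw [← tsum_mul_left]
    exact tendsto_nhds_unique hlim (by simp only [hf]; exact tendsto_const_nhds)
  rw [← eq_inv_of_mul_eq_one_right hLU]
  exact hsum.hasSum

lemma HasSum.ite_le_sub {u : ℕ → ℝ} {U : ℝ} (hu : HasSum u U) (i : ℕ) :
    HasSum (fun m => if i ≤ m then u (m - i) else 0) U := by
  let f : ℕ → ℝ := fun m => if i ≤ m then u (m - i) else 0
  have hzero : ∑ m ∈ range i, f m = 0 := sum_eq_zero fun m hm => if_neg (by simpa using hm)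
  have h := (hasSum_nat_add_iff (f := f) i).mp (by simpa [f] using hu)
  rwa [hzero, add_zero] at h

end Renewal

theorem stmt_10_general {Ω : Type*} [MeasurableSpace Ω] (μ : Measure Ω) [IsProbabilityMeasure μ]
    (eta : ℕ → Ω → ℝ) (hmeas : ∀ n, Measurable (eta n))
    (hindep : iIndepFun eta μ)
    (hident : ∀ n, IdentDistrib (eta n) (eta 0) μ μ)
    (x0 : ℝ)
    (L : ℝ) (hLpos : 0 < L)
    (hL : Tendsto
      (fun N : ℕ => ∏ k ∈ Finset.range N, (μ {ω | eta 0 ω ≤ x0 + (k : ℝ)}).toReal)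
      atTop (nhds L))
    (n : ℕ) (x : ℝ) (hx : x ∈ Set.Ioc (x0 + n) (x0 + n + 1))
    (R : ℕ → Ω → ℝ)
    (hR0 : ∀ ω, R 0 ω = x)
    (hRs : ∀ m ω, R (m + 1) ω = max (R m ω - 1) (eta m ω)) :
    -- E_x[T] written via E[T] = ∑_{m≥0} P(T > m), where
    -- {T > m} = {∀ i ∈ [1,m], R i > x0}
    ∑' m : ℕ, (μ {ω | ∀ i, 1 ≤ i → i ≤ m → x0 < R i ω}).toReal
      = (1 + ∑ j ∈ Finset.Icc 1 n, ∏ k ∈ Finset.range j,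
            (μ {ω | eta 0 ω ≤ x0 + (k : ℝ)}).toReal) / L := by
  let c : ℕ → ℝ := fun k => x0 + k
  have hc : Monotone c := fun a b hab => by simp only [c]; gcongr
  let π : ℕ → ℝ := fun j => ∏ k ∈ Finset.range j, (μ {ω | eta 0 ω ≤ c k}).toReal
  let u : ℕ → ℝ := fun s => (μ {ω | lastQuiet c (fun j => eta j ω) s = 0}).toReal
  let w : ℕ → ℕ → ℝ := fun m i => (μ {ω | lastQuiet c (fun j => eta j ω) m = i}).toReal
  have hu : HasSum u L⁻¹ := hasSum_inv_of_sum_range_mul_eq_one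
    (antitone_prod_range (fun _ => ENNReal.toReal_nonneg) fun _ => measureReal_le_one) hL hLpos
    (fun _ => ENNReal.toReal_nonneg)
    (sum_range_prod_mul_measure_lastQuiet_eq_one hmeas hindep hident hc)
  have hT : ∀ m, (μ {ω | ∀ i, 1 ≤ i → i ≤ m → x0 < R i ω}).toReal
      = ∑ i ∈ Finset.range (n + 1), w m i := fun m => by
    rw [← ENNReal.toReal_sum fun _ _ => measure_ne_top _ _, sum_measure_lastQuiet_eq hmeas]
    congr
    ext ω
    exact forall_lt_iff_lastQuiet_le (hR0 ω) (fun m => hRs m ω) hx m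
  have hw : ∀ i, HasSum (fun m => w m i) (π i * L⁻¹) := fun i => by
    have hwi : (fun m => w m i) = fun m => π i * if i ≤ m then u (m - i) else 0 :=
      funext fun m => by
      rw [mul_ite, mul_zero]
      exact toReal_measure_lastQuiet_eq_ite hmeas hindep hident hc m i
    rw [hwi]
    exact (hu.ite_le_sub i).mul_left (π i)
  rw [tsum_congr hT, (hasSum_sum fun i _ => hw i).tsum_eq, ← Finset.sum_mul,
    sum_range_succ_eq_add_sum_Icc, div_eq_mul_inv]
  simp [π, c]

theorem stmt_10 {Ω : Type*} [MeasurableSpace Ω] (μ : Measure Ω) [IsProbabilityMeasure μ]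
    (eta : ℕ → Ω → ℝ) (hmeas : ∀ n, Measurable (eta n))
    (hindep : iIndepFun eta μ)
    (hident : ∀ n, IdentDistrib (eta n) (eta 0) μ μ)
    (x0 : ℝ)
    (hP0 : 0 < (μ {ω | eta 0 ω ≤ x0}).toReal)
    (hP1 : (μ {ω | eta 0 ω ≤ x0}).toReal < 1)
    (hplus : Integrable (fun ω => max (eta 0 ω) 0) μ)
    (L : ℝ) (hLpos : 0 < L)
    (hL : Tendsto
      (fun N : ℕ => ∏ k ∈ Finset.range N, (μ {ω | eta 0 ω ≤ x0 + (k : ℝ)}).toReal)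
      atTop (nhds L))
    (n : ℕ) (x : ℝ) (hx : x ∈ Set.Ioc (x0 + n) (x0 + n + 1))
    (R : ℕ → Ω → ℝ)
    (hR0 : ∀ ω, R 0 ω = x)
    (hRs : ∀ m ω, R (m + 1) ω = max (R m ω - 1) (eta m ω)) :
    -- E_x[T] written via E[T] = ∑_{m≥0} P(T > m), where
    -- {T > m} = {∀ i ∈ [1,m], R i > x0}
    ∑' m : ℕ, (μ {ω | ∀ i, 1 ≤ i → i ≤ m → x0 < R i ω}).toReal
      = (1 + ∑ j ∈ Finset.Icc 1 n, ∏ k ∈ Finset.range j,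
            (μ {ω | eta 0 ω ≤ x0 + (k : ℝ)}).toReal) / L :=
  stmt_10_general μ eta hmeas hindep hident x0 L hLpos hL n x hx R hR0 hRs
end

section
/- If the random exchange process is transient (prod_{k=0}^infty P(eta_1 <= x_0+k) = 0 fails, with sum S = sum_{j=1}^infty prod_{k=0}^{j-1} P(eta_1 <= x_0+k) < infinity), then for x in (x_0+n, x_0+n+1], the probability of never returning below x_0 is P_x(T^{(R)}_{x_0} = infinity) = (1 + sum_{j=1}^{n} prod_{k=0}^{j-1} P(eta_1 <= x_0+k)) / (1 + S). -/
/-!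
Write `B m` for the event that the exchange chain, started at `x0 + m`, is at or below `x0` at
time `m`; it depends on `η 0, …, η (m - 1)` only and has probability
`π m = ∏ k < m, P(η ≤ x0 + k)`. Since `∑ π m = 1 + S < ∞`, by Borel–Cantelli almost surely only
finitely many `B m` occur, so there is a last time `m` with `B m` (`B 0` always holds). It equals
`m` iff `B m` holds and the chain restarted at time `m` never returns, so by independence of past
and future and stationarity its probability is `π m * a`, with `a` the non-return probability
from `(x0, x0 + 1]`. Summing over `m` gives `a = 1 / (1 + S)`, and from
`x ∈ (x0 + n, x0 + n + 1]` the chain never returns iff the last time is at most `n`.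
-/

open MeasureTheory Filter ProbabilityTheory Function
open scoped ENNReal

theorem pairwise_disjoint_setOf_isGreatest {α β : Type*} [PartialOrder β] (S : α → Set β) :
    Pairwise (Disjoint on fun b => {a | IsGreatest (S a) b}) := fun _ _ hne =>
  Set.disjoint_left.2 fun _ hb hb' => hne (hb.unique hb')

theorem Nat.forall_lt_not_iff_exists_isGreatest {P : ℕ → Prop} (h0 : P 0) (n : ℕ) :
    (∀ m, n < m → ¬P m) ↔ ∃ m ≤ n, IsGreatest {k | P k} m := by
  constructor
  · intro h
    have hbdd : n ∈ upperBounds {k | P k} := fun k hk => not_lt.1 fun hnk => h k hnk hk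
    obtain ⟨m, hm⟩ := BddAbove.exists_isGreatest_of_nonempty ⟨n, hbdd⟩ ⟨0, h0⟩
    exact ⟨m, hbdd hm.1, hm⟩
  · rintro ⟨m, hmn, -, hmax⟩ k hnk hk
    have := hmax hk
    omega

theorem ENNReal.tsum_eq_ofReal_of_hasSum_toReal {ι : Type*} {f : ι → ℝ≥0∞}
    (hf : ∀ i, f i ≠ ∞) {s : ℝ} (h : HasSum (fun i => (f i).toReal) s) :
    ∑' i, f i = ENNReal.ofReal s := by
  rw [← h.tsum_eq, ENNReal.ofReal_tsum_of_nonneg (fun _ => ENNReal.toReal_nonneg) h.summable]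
  exact tsum_congr fun i => (ENNReal.ofReal_toReal (hf i)).symm

theorem Finset.sum_range_succ_eq_add_sum_Icc {M : Type*} [AddCommMonoid M] (f : ℕ → M)
    (n : ℕ) : ∑ m ∈ Finset.range (n + 1), f m = f 0 + ∑ j ∈ Finset.Icc 1 n, f j := by
  rw [Finset.range_eq_Ico, Finset.sum_eq_sum_Ico_succ_bot (Nat.succ_pos n), zero_add,
    Nat.succ_eq_add_one, Finset.Ico_add_one_right_eq_Icc]

namespace RandomExchange

/-- The exchange chain `r (m + 1) = max (r m - 1) (f m)` started at `c + m` (or lower) is at or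
below `c` at time `m`; see `exchange_le_iff`. -/
def BelowAt (c : ℝ) (f : ℕ → ℝ) (m : ℕ) : Prop :=
  ∀ i < m, f i + (i + 1) ≤ c + m

/-- Started in `(c, c + 1]`, the chain driven by `f` never returns to `(-∞, c]`. -/
def NoReturn (c : ℝ) (f : ℕ → ℝ) : Prop :=
  ∀ ℓ, ¬BelowAt c f (ℓ + 1)

section Deterministic

variable {c : ℝ} {f : ℕ → ℝ} {m ℓ : ℕ}

theorem belowAt_zero (c : ℝ) (f : ℕ → ℝ) : BelowAt c f 0 :=
  fun _ hi => absurd hi (Nat.not_lt_zero _)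

theorem BelowAt.shift (h : BelowAt c f (m + ℓ)) : BelowAt c (fun i => f (i + m)) ℓ := by
  intro i hi
  have := h (i + m) (by omega)
  push_cast at this
  linarith

theorem BelowAt.append (h₁ : BelowAt c f m) (h₂ : BelowAt c (fun i => f (i + m)) ℓ) :
    BelowAt c f (m + ℓ) := by
  intro i hi
  push_cast
  rcases lt_or_ge i m with him | hmi
  · linarith [h₁ i him]
  · obtain ⟨j, rfl⟩ := Nat.exists_eq_add_of_le' hmi
    have := h₂ j (by omega)
    push_cast at this ⊢
    linarith

theorem isGreatest_belowAt_iff :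
    IsGreatest {k | BelowAt c f k} m ↔ BelowAt c f m ∧ NoReturn c (fun i => f (i + m)) := by
  refine and_congr_right fun hm => ⟨fun hmax ℓ hℓ => ?_, fun hno k hk => ?_⟩
  · have := hmax (hm.append hℓ)
    omega
  · by_contra! hlt
    obtain ⟨ℓ, rfl⟩ := Nat.exists_eq_add_of_lt hlt
    exact hno ℓ (BelowAt.shift (m := m) (by rwa [add_assoc] at hk))

theorem setOf_isGreatest_belowAt {Ω : Type*} (η : ℕ → Ω → ℝ) (c : ℝ) (m : ℕ) :
    {ω | IsGreatest {k | BelowAt c (fun i => η i ω) k} m}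
      = {ω | BelowAt c (fun i => η i ω) m} ∩ {ω | NoReturn c (fun i => η (i + m) ω)} :=
  Set.ext fun _ => isGreatest_belowAt_iff

theorem exchange_le_iff {x : ℝ} {r : ℕ → ℝ} (hr0 : r 0 = x)
    (hrs : ∀ m, r (m + 1) = max (r m - 1) (f m)) (c : ℝ) (m : ℕ) :
    r m ≤ c ↔ x ≤ c + m ∧ BelowAt c f m := by
  induction m generalizing c with
  | zero => simp [hr0, belowAt_zero]
  | succ m ih =>
    rw [hrs, max_le_iff, sub_le_iff_le_add, ih, BelowAt, BelowAt, Nat.forall_lt_succ_right]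
    push_cast
    constructor
    · rintro ⟨⟨hx, hf⟩, hm⟩
      exact ⟨by linarith, fun i hi => by linarith [hf i hi], by linarith⟩
    · rintro ⟨hx, hf, hm⟩
      exact ⟨⟨by linarith, fun i hi => by linarith [hf i hi]⟩, by linarith⟩

theorem exchange_forall_lt_iff {x : ℝ} {n : ℕ} (hx : x ∈ Set.Ioc (c + n) (c + n + 1))
    {r : ℕ → ℝ} (hr0 : r 0 = x) (hrs : ∀ m, r (m + 1) = max (r m - 1) (f m)) :
    (∀ m, 1 ≤ m → c < r m) ↔ ∀ m, n < m → ¬BelowAt c f m := by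
  refine forall_congr' fun m => ?_
  have hlevel : x ≤ c + m ↔ n < m := by
    constructor
    · intro h
      by_contra! hmn
      have : (m : ℝ) ≤ n := by exact_mod_cast hmn
      linarith [hx.1]
    · intro h
      have : (n : ℝ) + 1 ≤ m := by exact_mod_cast h
      linarith [hx.2]
  simp only [← not_le, exchange_le_iff hr0 hrs, hlevel, not_and]
  exact ⟨fun h hnm => h (by omega) hnm, fun h _ => h⟩

end Deterministic

section Measurability

variable {α : Type*} {c : ℝ}

theorem measurableSet_belowAt {M : MeasurableSpace α} {g : ℕ → α → ℝ} {ℓ : ℕ}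
    (hg : ∀ i < ℓ, Measurable[M] (g i)) : MeasurableSet[M] {a | BelowAt c (fun i => g i a) ℓ} := by
  simp only [BelowAt, Set.ofPred_forall]
  exact .iInter fun i => .iInter fun hi => measurableSet_le ((hg i hi).add_const _) measurable_const

theorem measurableSet_noReturn {M : MeasurableSpace α} {g : ℕ → α → ℝ}
    (hg : ∀ i, Measurable[M] (g i)) : MeasurableSet[M] {a | NoReturn c (fun i => g i a)} := by
  simp only [NoReturn, Set.ofPred_forall]
  exact .iInter fun ℓ => (measurableSet_belowAt fun i _ => hg i).compl

end Measurability

theorem infinitePi_belowAt (ρ : Measure ℝ) [IsProbabilityMeasure ρ] (c : ℝ) (ℓ : ℕ) :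
    Measure.infinitePi (fun _ : ℕ => ρ) {f | BelowAt c f ℓ}
      = ∏ k ∈ Finset.range ℓ, ρ (Set.Iic (c + k)) := by
  have hpi : {f | BelowAt c f ℓ}
      = Set.pi (Finset.range ℓ : Set ℕ) fun i : ℕ => Set.Iic (c + ℓ - ((i : ℝ) + 1)) := by
    ext f
    simp only [BelowAt, Set.mem_ofPred_eq, Set.mem_pi, Finset.coe_range, Set.mem_Iio, Set.mem_Iic]
    exact forall₂_congr fun i _ => by constructor <;> intro h <;> linarith
  rw [hpi, Measure.infinitePi_pi (μ := fun _ => ρ) fun _ _ => measurableSet_Iic,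
    ← Finset.prod_range_reflect]
  refine Finset.prod_congr rfl fun i hi => ?_
  rw [Finset.mem_range] at hi
  congr 2
  rw [Nat.sub_sub, Nat.cast_sub (by omega)]
  push_cast
  ring

section Law

variable {Ω : Type*} [MeasurableSpace Ω] {μ : Measure Ω} {η : ℕ → Ω → ℝ}

theorem map_shift_eq_infinitePi (hmeas : ∀ n, Measurable (η n)) (hindep : iIndepFun η μ)
    (hident : ∀ n, IdentDistrib (η n) (η 0) μ μ) (m : ℕ) :
    μ.map (fun ω i => η (i + m) ω) = Measure.infinitePi (fun _ => μ.map (η 0)) := by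
  rw [(hindep.precomp (g := (· + m)) (add_left_injective m)).map_fun_eq_infinitePi_map
    fun i => hmeas _]
  congr with i : 1
  exact (hident (i + m)).map_eq

theorem measure_shift_preimage (hmeas : ∀ n, Measurable (η n)) (hindep : iIndepFun η μ)
    (hident : ∀ n, IdentDistrib (η n) (η 0) μ μ) (m : ℕ) {s : Set (ℕ → ℝ)}
    (hs : MeasurableSet s) :
    μ ((fun ω i => η (i + m) ω) ⁻¹' s) = Measure.infinitePi (fun _ => μ.map (η 0)) s := by
  rw [← map_shift_eq_infinitePi hmeas hindep hident m,
    Measure.map_apply (measurable_pi_lambda _ fun i => hmeas _) hs]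

variable (hmeas : ∀ n, Measurable (η n)) (hindep : iIndepFun η μ)
  (hident : ∀ n, IdentDistrib (η n) (η 0) μ μ) (c : ℝ)

include hmeas hindep hident

theorem measure_belowAt (m : ℕ) :
    μ {ω | BelowAt c (fun i => η i ω) m} = ∏ k ∈ Finset.range m, μ {ω | η 0 ω ≤ c + k} := by
  have := hindep.isProbabilityMeasure
  have := Measure.isProbabilityMeasure_map (μ := μ) (hmeas 0).aemeasurable
  calc μ {ω | BelowAt c (fun i => η i ω) m}
      = Measure.infinitePi (fun _ => μ.map (η 0)) {f | BelowAt c f m} :=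
        measure_shift_preimage hmeas hindep hident 0
          (measurableSet_belowAt fun i _ => measurable_pi_apply i)
    _ = _ := by
      rw [infinitePi_belowAt]
      exact Finset.prod_congr rfl fun k _ => Measure.map_apply (hmeas 0) measurableSet_Iic

theorem measure_noReturn_shift (m : ℕ) :
    μ {ω | NoReturn c (fun i => η (i + m) ω)} = μ {ω | NoReturn c (fun i => η i ω)} := by
  have hs := measurableSet_noReturn (c := c) fun i => measurable_pi_apply (X := fun _ : ℕ => ℝ) i
  exact (measure_shift_preimage hmeas hindep hident m hs).trans
    (measure_shift_preimage hmeas hindep hident 0 hs).symm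

omit hident in
theorem measure_belowAt_inter_noReturn (m : ℕ) :
    μ ({ω | BelowAt c (fun i => η i ω) m} ∩ {ω | NoReturn c (fun i => η (i + m) ω)})
      = μ {ω | BelowAt c (fun i => η i ω) m} * μ {ω | NoReturn c (fun i => η (i + m) ω)} := by
  have hpast_future := indep_iSup_of_disjoint (fun i => (hmeas i).comap_le) hindep.iIndep
    (S := {i | i < m}) (T := {i | m ≤ i}) (Set.disjoint_left.2 fun i hS hT => by
      simp only [Set.mem_ofPred_eq] at hS hT; omega)
  refine (Indep_iff _ _ _).1 hpast_future _ _ (measurableSet_belowAt fun i hi => ?_)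
    (measurableSet_noReturn fun i => ?_)
  · exact (comap_measurable (η i)).mono
      (le_biSup (fun i => MeasurableSpace.comap (η i) _) (show i ∈ {i | i < m} from hi)) le_rfl
  · exact (comap_measurable (η (i + m))).mono
      (le_biSup (fun i => MeasurableSpace.comap (η i) _)
        (show i + m ∈ {i | m ≤ i} from Nat.le_add_left m i)) le_rfl

theorem measure_isGreatest_belowAt (m : ℕ) :
    μ {ω | IsGreatest {k | BelowAt c (fun i => η i ω) k} m}
      = (∏ k ∈ Finset.range m, μ {ω | η 0 ω ≤ c + k}) * μ {ω | NoReturn c (fun i => η i ω)} := by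
  rw [setOf_isGreatest_belowAt, measure_belowAt_inter_noReturn hmeas hindep,
    measure_belowAt hmeas hindep hident, measure_noReturn_shift hmeas hindep hident]

omit hindep hident in
theorem measurableSet_isGreatest_belowAt (m : ℕ) :
    MeasurableSet {ω | IsGreatest {k | BelowAt c (fun i => η i ω) k} m} := by
  rw [setOf_isGreatest_belowAt]
  exact (measurableSet_belowAt fun i _ => hmeas i).inter (measurableSet_noReturn fun i => hmeas _)

theorem tsum_prod_mul_measure_noReturn
    (hsum : ∑' m, ∏ k ∈ Finset.range m, μ {ω | η 0 ω ≤ c + k} ≠ ∞) :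
    (∑' m, ∏ k ∈ Finset.range m, μ {ω | η 0 ω ≤ c + k}) * μ {ω | NoReturn c (fun i => η i ω)}
      = 1 := by
  have := hindep.isProbabilityMeasure
  set L : ℕ → Set Ω := fun m => {ω | IsGreatest {k | BelowAt c (fun i => η i ω) k} m}
  have hcover : ∀ᵐ ω ∂μ, ω ∈ ⋃ m, L m := by
    simp_rw [← measure_belowAt hmeas hindep hident] at hsum
    filter_upwards [ae_eventually_notMem hsum] with ω hω
    obtain ⟨N, hN⟩ := eventually_atTop.1 hω
    obtain ⟨m, -, hm⟩ := (Nat.forall_lt_not_iff_exists_isGreatest (belowAt_zero c _) N).1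
      fun k hk => hN k hk.le
    exact Set.mem_iUnion.2 ⟨m, hm⟩
  calc _ = ∑' m, μ (L m) := by
        rw [← ENNReal.tsum_mul_right]
        simp only [L, measure_isGreatest_belowAt hmeas hindep hident]
    _ = μ (⋃ m, L m) := (measure_iUnion (pairwise_disjoint_setOf_isGreatest _)
        (measurableSet_isGreatest_belowAt hmeas c)).symm
    _ = 1 := by
      rw [← measure_univ (μ := μ)]
      exact (ae_iff_measure_eq (MeasurableSet.iUnion
        (measurableSet_isGreatest_belowAt hmeas c)).nullMeasurableSet).1 hcover

theorem measure_forall_lt_not_belowAt (n : ℕ) :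
    μ {ω | ∀ m, n < m → ¬BelowAt c (fun i => η i ω) m}
      = (∑ m ∈ Finset.range (n + 1), ∏ k ∈ Finset.range m, μ {ω | η 0 ω ≤ c + k})
        * μ {ω | NoReturn c (fun i => η i ω)} := by
  have hset : {ω | ∀ m, n < m → ¬BelowAt c (fun i => η i ω) m}
      = ⋃ m ∈ Finset.range (n + 1), {ω | IsGreatest {k | BelowAt c (fun i => η i ω) k} m} := by
    ext ω
    simp only [Set.mem_ofPred_eq, Set.mem_iUnion, Finset.mem_range, Nat.lt_succ_iff, exists_prop,
      Nat.forall_lt_not_iff_exists_isGreatest (belowAt_zero c _)]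
  rw [hset, measure_biUnion_finset ((pairwise_disjoint_setOf_isGreatest _).set_pairwise _)
      fun m _ => measurableSet_isGreatest_belowAt hmeas c m,
    Finset.sum_mul]
  exact Finset.sum_congr rfl fun m _ => measure_isGreatest_belowAt hmeas hindep hident c m

end Law

end RandomExchange

open RandomExchange

theorem stmt_12_general {Ω : Type*} [MeasurableSpace Ω] (μ : Measure Ω) [IsProbabilityMeasure μ]
    (eta : ℕ → Ω → ℝ) (hmeas : ∀ n, Measurable (eta n))
    (hindep : iIndepFun eta μ)
    (hident : ∀ n, IdentDistrib (eta n) (eta 0) μ μ)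
    (x0 : ℝ)
    (S : ℝ)
    (hS : HasSum (fun j : ℕ =>
      ∏ k ∈ Finset.range (j + 1), (μ {ω | eta 0 ω ≤ x0 + (k : ℝ)}).toReal) S)
    (n : ℕ) (x : ℝ) (hx : x ∈ Set.Ioc (x0 + n) (x0 + n + 1))
    (R : ℕ → Ω → ℝ)
    (hR0 : ∀ ω, R 0 ω = x)
    (hRs : ∀ m ω, R (m + 1) ω = max (R m ω - 1) (eta m ω)) :
    (μ {ω | ∀ m, 1 ≤ m → x0 < R m ω}).toReal
      = (1 + ∑ j ∈ Finset.Icc 1 n, ∏ k ∈ Finset.range j,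
            (μ {ω | eta 0 ω ≤ x0 + (k : ℝ)}).toReal) / (1 + S) := by
  have hfin : ∀ m, ∏ k ∈ Finset.range m, μ {ω | eta 0 ω ≤ x0 + k} ≠ ∞ :=
    fun m => ENNReal.prod_ne_top fun k _ => measure_ne_top μ _
  have hS0 : 0 ≤ S := hS.nonneg fun j => by positivity
  have htsum : ∑' m, ∏ k ∈ Finset.range m, μ {ω | eta 0 ω ≤ x0 + k} = ENNReal.ofReal (1 + S) :=
    ENNReal.tsum_eq_ofReal_of_hasSum_toReal hfin <| by
      simpa only [ENNReal.toReal_prod, Finset.prod_range_zero] using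
        hS.zero_add (f := fun m => ∏ k ∈ Finset.range m, (μ {ω | eta 0 ω ≤ x0 + k}).toReal)
  have hnoReturn : μ {ω | NoReturn x0 (fun i => eta i ω)} = (ENNReal.ofReal (1 + S))⁻¹ := by
    refine ENNReal.eq_inv_of_mul_eq_one_left ((mul_comm _ _).trans ?_)
    rw [← htsum]
    exact tsum_prod_mul_measure_noReturn hmeas hindep hident x0 (htsum ▸ ENNReal.ofReal_ne_top)
  rw [Set.ext fun ω => exchange_forall_lt_iff hx (hR0 ω) (hRs · ω),
    measure_forall_lt_not_belowAt hmeas hindep hident, hnoReturn, ENNReal.toReal_mul,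
    ENNReal.toReal_inv, ENNReal.toReal_ofReal (by linarith), ENNReal.toReal_sum fun m _ => hfin m,
    Finset.sum_range_succ_eq_add_sum_Icc, div_eq_mul_inv]
  simp [ENNReal.toReal_prod]

theorem stmt_12 {Ω : Type*} [MeasurableSpace Ω] (μ : Measure Ω) [IsProbabilityMeasure μ]
    (eta : ℕ → Ω → ℝ) (hmeas : ∀ n, Measurable (eta n))
    (hindep : iIndepFun eta μ)
    (hident : ∀ n, IdentDistrib (eta n) (eta 0) μ μ)
    (x0 : ℝ)
    (hP0 : 0 < (μ {ω | eta 0 ω ≤ x0}).toReal)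
    (hP1 : (μ {ω | eta 0 ω ≤ x0}).toReal < 1)
    (S : ℝ)
    (hS : HasSum (fun j : ℕ =>
      ∏ k ∈ Finset.range (j + 1), (μ {ω | eta 0 ω ≤ x0 + (k : ℝ)}).toReal) S)
    (n : ℕ) (x : ℝ) (hx : x ∈ Set.Ioc (x0 + n) (x0 + n + 1))
    (R : ℕ → Ω → ℝ)
    (hR0 : ∀ ω, R 0 ω = x)
    (hRs : ∀ m ω, R (m + 1) ω = max (R m ω - 1) (eta m ω)) :
    (μ {ω | ∀ m, 1 ≤ m → x0 < R m ω}).toReal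
      = (1 + ∑ j ∈ Finset.Icc 1 n, ∏ k ∈ Finset.range j,
            (μ {ω | eta 0 ω ≤ x0 + (k : ℝ)}).toReal) / (1 + S) :=
  stmt_12_general μ eta hmeas hindep hident x0 S hS n x hx R hR0 hRs
end

section
/- Let v(n,k) = P_{x}(T^{(R)}_{x_0} > n) for x in (x_0+k, x_0+k+1] (well-defined: the probability is constant on this interval). Then for n > k >= 1, v(n,k) = v(n,0) + sum_{m=1}^{k} v(n-m,0) * prod_{j=0}^{m-1} P(eta_1 <= x_0+j). -/
open MeasureTheory ProbabilityTheory

/-! Pathwise, `x0 < R_i` iff either the deterministic descent `x - i` is still above `x0` or some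
earlier innovation `η_m` still exceeds `x0` after the `i - 1 - m` unit decrements since it
arrived. Hence survival from `x0 + k + 2` and survival from `x0 + k + 1` differ exactly on the
event that `η_0, …, η_k` all stay below the barrier `x0 + k - m`; on that event the walk sits at
`x0 + 1` at time `k + 1`, so from then on it survives as the walk started at `x0 + 1` driven by
the shifted sequence. Independence of the two blocks and shift invariance of the i.i.d. law give
`v(n, k+1) = v(n, k) + v(n-k-1, 0) ∏_{j ≤ k} P(η ≤ x0 + j)`, which telescopes. -/

theorem lt_iff_of_succ_eq_max_sub_one {r g : ℕ → ℝ} (hr : ∀ m, r (m + 1) = max (r m - 1) (g m))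
    (y : ℝ) (i : ℕ) :
    y < r i ↔ y + i < r 0 ∨ ∃ m < i, y + ((i : ℝ) - 1 - m) < g m := by
  induction i generalizing y with
  | zero => simp
  | succ i ih =>
    rw [hr, lt_max_iff, lt_sub_iff_add_lt, ih, Nat.exists_lt_succ_right]
    push_cast
    constructor
    · rintro ((h | ⟨m, hm, h⟩) | h)
      · left; linarith
      · right; exact Or.inl ⟨m, hm, by linarith⟩
      · right; exact Or.inr (by linarith)
    · rintro (h | ⟨m, hm, h⟩ | h)
      · left; left; linarith
      · left; right; exact ⟨m, hm, by linarith⟩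
      · right; linarith

/-- Survival up to time `n` of the walk started at `x0 + k + 1`, read off the innovation path `g`
(`g m` drives step `m + 1`). -/
def survivalSet (x0 : ℝ) (k n : ℕ) : Set (ℕ → ℝ) :=
  {g | ∀ i, k < i → i ≤ n → ∃ m < i, x0 + ((i : ℝ) - 1 - m) < g m}

theorem measurableSet_survivalSet (x0 : ℝ) (k n : ℕ) : MeasurableSet (survivalSet x0 k n) := by
  simp only [survivalSet, Set.ofPred_forall, Set.ofPred_exists]
  measurability

def belowBarrier (x0 : ℝ) (k : ℕ) : Set (Fin k → ℝ) :=
  Set.univ.pi fun i => Set.Iic (x0 + ((k : ℝ) - 1 - i))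

section Paths

variable {x0 : ℝ} {k n : ℕ}

theorem survivalSet_eq_sdiff (hkn : k < n) :
    survivalSet x0 k n =
      survivalSet x0 (k + 1) n \ (fun g (i : Fin (k + 1)) => g i) ⁻¹' belowBarrier x0 (k + 1) := by
  ext g
  simp only [survivalSet, belowBarrier, Set.mem_sdiff, Set.mem_ofPred_eq, Set.mem_preimage,
    Set.mem_univ_pi, Set.mem_Iic, not_forall, not_le]
  constructor
  · intro h
    refine ⟨fun i hi hin => h i (by omega) hin, ?_⟩
    obtain ⟨m, hm, hlt⟩ := h (k + 1) (by omega) hkn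
    exact ⟨⟨m, hm⟩, hlt⟩
  · rintro ⟨h, ⟨m, hlt⟩⟩ i hi hin
    rcases Nat.lt_or_ge (k + 1) i with hki | hki
    · exact h i hki hin
    · obtain rfl : i = k + 1 := by omega
      exact ⟨m, m.2, hlt⟩

theorem survivalSet_inter_belowBarrier :
    survivalSet x0 (k + 1) n ∩ (fun g (i : Fin (k + 1)) => g i) ⁻¹' belowBarrier x0 (k + 1) =
      (fun g j => g (k + 1 + j)) ⁻¹' survivalSet x0 0 (n - (k + 1)) ∩
        (fun g (i : Fin (k + 1)) => g i) ⁻¹' belowBarrier x0 (k + 1) := by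
  ext g
  simp only [survivalSet, belowBarrier, Set.mem_inter_iff, Set.mem_ofPred_eq, Set.mem_preimage,
    Set.mem_univ_pi, Set.mem_Iic, and_congr_left_iff]
  intro hlow
  constructor
  · intro h i hi hin
    obtain ⟨m, hm, hlt⟩ := h (k + 1 + i) (by omega) (by omega)
    have hkm : k + 1 ≤ m := by
      by_contra! hmk
      have := hlow ⟨m, hmk⟩
      push_cast at this hlt
      linarith
    refine ⟨m - (k + 1), by omega, ?_⟩
    rw [Nat.add_sub_cancel' hkm]
    push_cast [Nat.cast_sub hkm] at hlt ⊢
    linarith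
  · intro h i hi hin
    obtain ⟨m, hm, hlt⟩ := h (i - (k + 1)) (by omega) (by omega)
    refine ⟨k + 1 + m, by omega, ?_⟩
    push_cast [Nat.cast_sub (by omega : k + 1 ≤ i)] at hlt ⊢
    linarith

theorem preimage_survivalSet_eq_setOf_forall_lt {Ω : Type*} {eta : ℕ → Ω → ℝ} {R : ℝ → ℕ → Ω → ℝ}
    (hR0 : ∀ x ω, R x 0 ω = x) (hRs : ∀ x m ω, R x (m + 1) ω = max (R x m ω - 1) (eta m ω))
    (x0 : ℝ) (k n : ℕ) :
    (fun ω m => eta m ω) ⁻¹' survivalSet x0 k n =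
      {ω | ∀ i, 1 ≤ i → i ≤ n → x0 < R (x0 + k + 1) i ω} := by
  ext ω
  simp only [survivalSet, Set.mem_preimage, Set.mem_ofPred_eq]
  refine forall_congr' fun i => ?_
  have hR := lt_iff_of_succ_eq_max_sub_one (r := fun i => R (x0 + k + 1) i ω)
    (g := fun m => eta m ω) (fun m => hRs _ m ω) x0 i
  simp only [hR0] at hR
  rw [hR]
  rcases Nat.lt_or_ge k i with hki | hik
  · have : ¬ x0 + i < x0 + k + 1 := by
      have : (k : ℝ) + 1 ≤ i := by exact_mod_cast hki
      linarith
    simp [hki, Nat.one_le_of_lt hki, this]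
  · have : x0 + i < x0 + k + 1 := by
      have : (i : ℝ) ≤ k := by exact_mod_cast hik
      linarith
    simp [hik.not_gt, this]

end Paths

theorem ProbabilityTheory.iIndepFun.indepFun_comp_of_disjoint {Ω ι α β E : Type*}
    {mΩ : MeasurableSpace Ω} {μ : Measure Ω} [MeasurableSpace E] {f : ι → Ω → E}
    (hf : ∀ i, Measurable (f i)) (h : iIndepFun f μ) {a : α → ι} {b : β → ι}
    (hab : Disjoint (Set.range a) (Set.range b)) :
    IndepFun (fun ω x => f (a x) ω) (fun ω y => f (b y) ω) μ := by
  set m : ι → MeasurableSpace Ω := fun i => MeasurableSpace.comap (f i) inferInstance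
  have ha : MeasurableSpace.comap (fun ω x => f (a x) ω) MeasurableSpace.pi ≤
      ⨆ i ∈ Set.range a, m i := by
    simp only [MeasurableSpace.pi, MeasurableSpace.comap_iSup, MeasurableSpace.comap_comp,
      Function.comp_def]
    exact iSup_le fun x => le_biSup m ⟨x, rfl⟩
  have hb : MeasurableSpace.comap (fun ω y => f (b y) ω) MeasurableSpace.pi ≤
      ⨆ i ∈ Set.range b, m i := by
    simp only [MeasurableSpace.pi, MeasurableSpace.comap_iSup, MeasurableSpace.comap_comp,
      Function.comp_def]
    exact iSup_le fun y => le_biSup m ⟨y, rfl⟩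
  rw [IndepFun_iff_Indep]
  exact indep_of_indep_of_le
    (indep_iSup_of_disjoint (fun i => (hf i).comap_le) ((iIndepFun_iff_iIndep _ _ _).1 h) hab)
    ha hb

section Iid

variable {Ω : Type*} [MeasurableSpace Ω] {μ : Measure Ω} {eta : ℕ → Ω → ℝ}

theorem map_shift_eq_map_of_iid (hmeas : ∀ n, Measurable (eta n)) (hindep : iIndepFun eta μ)
    (hident : ∀ n, IdentDistrib (eta n) (eta 0) μ μ) (s : ℕ) :
    μ.map (fun ω j => eta (s + j) ω) = μ.map (fun ω j => eta j ω) := by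
  rw [(hindep.precomp (add_right_injective s)).map_fun_eq_infinitePi_map (fun j => hmeas _),
    hindep.map_fun_eq_infinitePi_map hmeas]
  simp only [(hident _).map_eq]

theorem measure_preimage_belowBarrier [IsFiniteMeasure μ] (hmeas : ∀ n, Measurable (eta n))
    (hindep : iIndepFun eta μ) (hident : ∀ n, IdentDistrib (eta n) (eta 0) μ μ) (x0 : ℝ) (k : ℕ) :
    μ ((fun ω (i : Fin k) => eta i ω) ⁻¹' belowBarrier x0 k) =
      ∏ j ∈ Finset.range k, μ {ω | eta 0 ω ≤ x0 + j} := by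
  have hblock : Measurable fun ω (i : Fin k) => eta i ω := measurable_pi_iff.2 fun i => hmeas i
  rw [belowBarrier, ← Measure.map_apply hblock (MeasurableSet.univ_pi fun _ => measurableSet_Iic),
    iIndepFun.map_fun_eq_pi_map (fun i : Fin k => (hmeas i).aemeasurable)
      (hindep.precomp Fin.val_injective),
    Measure.pi_pi]
  simp only [(hident _).map_eq, Measure.map_apply (hmeas 0) measurableSet_Iic]
  rw [Fin.prod_univ_eq_prod_range (fun i => μ (eta 0 ⁻¹' Set.Iic (x0 + ((k : ℝ) - 1 - i)))),
    ← Finset.prod_range_reflect]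
  refine Finset.prod_congr rfl fun j hj => ?_
  rw [Finset.mem_range] at hj
  rw [Nat.cast_sub (by omega : j ≤ k - 1), Nat.cast_sub (by omega : 1 ≤ k), Nat.cast_one,
    sub_sub_cancel]
  rfl

theorem measure_survivalSet_succ [IsFiniteMeasure μ] (hmeas : ∀ n, Measurable (eta n))
    (hindep : iIndepFun eta μ) (hident : ∀ n, IdentDistrib (eta n) (eta 0) μ μ) (x0 : ℝ)
    {k n : ℕ} (hkn : k < n) :
    μ ((fun ω m => eta m ω) ⁻¹' survivalSet x0 (k + 1) n) =
      μ ((fun ω m => eta m ω) ⁻¹' survivalSet x0 k n) +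
        μ ((fun ω m => eta m ω) ⁻¹' survivalSet x0 0 (n - (k + 1))) *
          ∏ j ∈ Finset.range (k + 1), μ {ω | eta 0 ω ≤ x0 + j} := by
  have hpath : Measurable fun ω m => eta m ω := measurable_pi_iff.2 hmeas
  have hshift : Measurable fun ω j => eta (k + 1 + j) ω := measurable_pi_iff.2 fun j => hmeas _
  have hblock : Measurable fun ω (i : Fin (k + 1)) => eta i ω :=
    measurable_pi_iff.2 fun i => hmeas i
  have hlow : MeasurableSet (belowBarrier x0 (k + 1)) :=
    MeasurableSet.univ_pi fun _ => measurableSet_Iic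
  have hindep_blocks : IndepFun (fun ω (i : Fin (k + 1)) => eta i ω)
      (fun ω j => eta (k + 1 + j) ω) μ :=
    hindep.indepFun_comp_of_disjoint hmeas (a := Fin.val) (b := (k + 1 + ·)) <| by
      rw [Set.disjoint_left]
      rintro _ ⟨i, rfl⟩ ⟨j, hj⟩
      have := i.isLt
      simp only at hj
      omega
  have hlow_path : MeasurableSet ((fun ω m => eta m ω) ⁻¹'
      ((fun g (i : Fin (k + 1)) => g i) ⁻¹' belowBarrier x0 (k + 1))) := hblock hlow
  rw [← measure_inter_add_sdiff _ hlow_path, ← Set.preimage_inter, ← Set.preimage_sdiff,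
    survivalSet_inter_belowBarrier, ← survivalSet_eq_sdiff hkn, add_comm]
  congr 1
  calc μ ((fun ω j => eta (k + 1 + j) ω) ⁻¹' survivalSet x0 0 (n - (k + 1)) ∩
          (fun ω (i : Fin (k + 1)) => eta i ω) ⁻¹' belowBarrier x0 (k + 1))
      = μ ((fun ω j => eta (k + 1 + j) ω) ⁻¹' survivalSet x0 0 (n - (k + 1))) *
          μ ((fun ω (i : Fin (k + 1)) => eta i ω) ⁻¹' belowBarrier x0 (k + 1)) :=
        hindep_blocks.symm.measure_inter_preimage_eq_mul _ _ (measurableSet_survivalSet ..) hlow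
    _ = _ := by
      rw [← Measure.map_apply hshift (measurableSet_survivalSet ..),
        map_shift_eq_map_of_iid hmeas hindep hident,
        Measure.map_apply hpath (measurableSet_survivalSet ..),
        measure_preimage_belowBarrier hmeas hindep hident]

end Iid

theorem stmt_13_general {Ω : Type*} [MeasurableSpace Ω] (μ : Measure Ω) [IsProbabilityMeasure μ]
    (eta : ℕ → Ω → ℝ) (hmeas : ∀ n, Measurable (eta n))
    (hindep : iIndepFun eta μ)
    (hident : ∀ n, IdentDistrib (eta n) (eta 0) μ μ)
    (x0 : ℝ)
    (R : ℝ → ℕ → Ω → ℝ)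
    (hR0 : ∀ x ω, R x 0 ω = x)
    (hRs : ∀ x m ω, R x (m + 1) ω = max (R x m ω - 1) (eta m ω))
    -- v n k = P_{x}(T^{(R)}_{x0} > n) for x ∈ (x0+k, x0+k+1]; in particular for x=x0+k+1
    (v : ℕ → ℕ → ℝ)
    (hv : ∀ n k : ℕ, v n k =
      (μ {ω | ∀ i, 1 ≤ i → i ≤ n → x0 < R (x0 + k + 1) i ω}).toReal) :
    ∀ n k : ℕ, 1 ≤ k → k < n →
      v n k = v n 0 + ∑ m ∈ Finset.Icc 1 k, v (n - m) 0 *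
        ∏ j ∈ Finset.range m, (μ {ω | eta 0 ω ≤ x0 + (j : ℝ)}).toReal := by
  have step : ∀ n k : ℕ, k < n → v n (k + 1) = v n k + v (n - (k + 1)) 0 *
      ∏ j ∈ Finset.range (k + 1), (μ {ω | eta 0 ω ≤ x0 + (j : ℝ)}).toReal := by
    intro n k hkn
    simp only [hv, ← preimage_survivalSet_eq_setOf_forall_lt hR0 hRs,
      measure_survivalSet_succ hmeas hindep hident x0 hkn, ← ENNReal.toReal_prod]
    rw [ENNReal.toReal_add (measure_ne_top _ _)
      (ENNReal.mul_ne_top (measure_ne_top _ _) (ENNReal.prod_ne_top fun _ _ => measure_ne_top _ _)),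
      ENNReal.toReal_mul]
  rintro n k - hkn
  induction k with
  | zero => simp
  | succ k ih =>
    rw [step n k (by omega), ih (by omega), Finset.sum_Icc_succ_top (by omega)]
    ring

theorem stmt_13 {Ω : Type*} [MeasurableSpace Ω] (μ : Measure Ω) [IsProbabilityMeasure μ]
    (eta : ℕ → Ω → ℝ) (hmeas : ∀ n, Measurable (eta n))
    (hindep : iIndepFun eta μ)
    (hident : ∀ n, IdentDistrib (eta n) (eta 0) μ μ)
    (x0 : ℝ)
    (hP0 : 0 < (μ {ω | eta 0 ω < x0}).toReal)
    (hP1 : (μ {ω | eta 0 ω < x0}).toReal < 1)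
    (R : ℝ → ℕ → Ω → ℝ)
    (hR0 : ∀ x ω, R x 0 ω = x)
    (hRs : ∀ x m ω, R x (m + 1) ω = max (R x m ω - 1) (eta m ω))
    -- v n k = P_{x}(T^{(R)}_{x0} > n) for x ∈ (x0+k, x0+k+1]; in particular for x=x0+k+1
    (v : ℕ → ℕ → ℝ)
    (hv : ∀ n k : ℕ, v n k =
      (μ {ω | ∀ i, 1 ≤ i → i ≤ n → x0 < R (x0 + k + 1) i ω}).toReal)
    -- the probability is constant in x on (x0+k, x0+k+1]
    (hconst : ∀ n k : ℕ, ∀ x ∈ Set.Ioc (x0 + (k : ℝ)) (x0 + k + 1),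
      (μ {ω | ∀ i, 1 ≤ i → i ≤ n → x0 < R x i ω}).toReal = v n k) :
    ∀ n k : ℕ, 1 ≤ k → k < n →
      v n k = v n 0 + ∑ m ∈ Finset.Icc 1 k, v (n - m) 0 *
        ∏ j ∈ Finset.range m, (μ {ω | eta 0 ω ≤ x0 + (j : ℝ)}).toReal :=
  stmt_13_general μ eta hmeas hindep hident x0 R hR0 hRs v hv
end
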